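/- arXiv:2202.08389 — 14 statements merged into one kernel-verified Lean document; each statement's English description precedes it below -/
import Mathlib

section
/- Assume ∑_{i=1}^k ℓ_i ≥ ∑_{j=k+1}^n ℓ_j. Then Δ(A) = ⋃_{i=1}^k Δ_i, i.e. the convex hull of {0, a_1, …, a_n} is the union over i ∈ {1,…,k} of the convex hulls of {0} ∪ {a_μ : μ ≠ i}. (Lemma 2.2.) -/
/-!
A point of `Δ(A)` is `∑ c_μ a_μ` with `c ≥ 0` and `∑ c ≤ 1`. Replace `c` by `c - t ℓ`, where `ℓ` is
the signed relation vector and `t = min_{i ≤ k} c_i / ℓ_i`: the point is unchanged because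
`∑ ℓ_μ a_μ = 0`, the coefficients stay nonnegative by minimality of `t`, their sum does not grow
because `∑_{i ≤ k} ℓ_i ≥ ∑_{j > k} ℓ_j`, and the coefficient of the minimising `a_i` vanishes, so
the point lies in `Δ_i`.
-/

open Finset

variable {𝕜 E ι : Type*} [Field 𝕜] [LinearOrder 𝕜] [IsStrictOrderedRing 𝕜]
  [AddCommGroup E] [Module 𝕜 E] [Fintype ι]

theorem mem_convexHull_zero_union_image_iff {v : ι → E} {S : Set ι} {x : E} :
    x ∈ convexHull 𝕜 ({0} ∪ v '' S) ↔
      ∃ c : ι → 𝕜, (∀ i, 0 ≤ c i) ∧ ∑ i, c i ≤ 1 ∧ (∀ i ∉ S, c i = 0) ∧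
        ∑ i, c i • v i = x := by
  classical
  constructor
  · refine fun hx => convexHull_min (t := {y | ∃ c : ι → 𝕜, (∀ i, 0 ≤ c i) ∧ ∑ i, c i ≤ 1 ∧
      (∀ i ∉ S, c i = 0) ∧ ∑ i, c i • v i = y}) ?_ ?_ hx
    · rintro _ (rfl | ⟨j, hj, rfl⟩)
      · exact ⟨0, fun _ => le_rfl, by simp, fun _ _ => rfl, by simp⟩
      · refine ⟨Pi.single j 1, fun i => ?_, by simp, fun i hi => ?_, by simp⟩
        · by_cases h : i = j <;> simp [h]
        · exact Pi.single_eq_of_ne (by rintro rfl; exact hi hj) _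
    · rintro _ ⟨c, hc0, hc1, hcS, rfl⟩ _ ⟨c', hc0', hc1', hcS', rfl⟩ a b ha hb hab
      refine ⟨a • c + b • c', fun i => ?_, ?_, fun i hi => ?_, ?_⟩
      · simp only [Pi.add_apply, Pi.smul_apply, smul_eq_mul]
        exact add_nonneg (mul_nonneg ha (hc0 i)) (mul_nonneg hb (hc0' i))
      · simp only [Pi.add_apply, Pi.smul_apply, smul_eq_mul, sum_add_distrib, ← mul_sum]
        linarith [mul_le_mul_of_nonneg_left hc1 ha, mul_le_mul_of_nonneg_left hc1' hb]
      · simp [hcS i hi, hcS' i hi]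
      · simp only [Pi.add_apply, Pi.smul_apply, add_smul, smul_assoc, sum_add_distrib, smul_sum]
  · rintro ⟨c, hc0, hc1, hcS, rfl⟩
    -- `0` takes the remaining weight; points outside `S` have weight `0`, so they may be moved to `0`.
    refine mem_convexHull_of_exists_fintype (fun o : Option ι => o.elim (1 - ∑ i, c i) c)
      (fun o => o.elim 0 fun i => if i ∈ S then v i else 0) ?_ ?_ ?_ ?_
    · rintro (_ | i)
      · exact sub_nonneg.2 hc1
      · exact hc0 i
    · simp [Fintype.sum_option]
    · rintro (_ | i)
      · exact Or.inl rfl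
      · by_cases hi : i ∈ S
        · exact Or.inr ⟨i, hi, by simp [hi]⟩
        · exact Or.inl (by simp [hi])
    · refine (Fintype.sum_option _).trans ?_
      simp only [Option.elim, smul_zero, zero_add]
      refine sum_congr rfl fun i _ => ?_
      by_cases hi : i ∈ S
      · simp [hi]
      · simp [hi, hcS i hi]

theorem exists_pos_mem_convexHull_zero_union_image_ne {v : ι → E} {w : ι → 𝕜}
    (hw : ∑ i, w i • v i = 0) (hsum : 0 ≤ ∑ i, w i) (hpos : ∃ i, 0 < w i) {x : E}
    (hx : x ∈ convexHull 𝕜 ({0} ∪ Set.range v)) :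
    ∃ i, 0 < w i ∧ x ∈ convexHull 𝕜 ({0} ∪ v '' {j | j ≠ i}) := by
  classical
  rw [← Set.image_univ, mem_convexHull_zero_union_image_iff] at hx
  obtain ⟨c, hc0, hc1, -, rfl⟩ := hx
  obtain ⟨i, hi, hmin⟩ := exists_min_image {j | 0 < w j} (fun j => c j / w j)
    (hpos.imp fun j hj => (mem_filter_univ j).2 hj)
  rw [mem_filter_univ] at hi
  set t := c i / w i
  have ht : 0 ≤ t := div_nonneg (hc0 i) hi.le
  refine ⟨i, hi, mem_convexHull_zero_union_image_iff.2
    ⟨fun j => c j - t * w j, fun j => ?_, ?_, fun j hj => ?_, ?_⟩⟩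
  · rw [sub_nonneg]
    rcases lt_or_ge 0 (w j) with hj | hj
    · exact (le_div_iff₀ hj).1 (hmin j ((mem_filter_univ j).2 hj))
    · exact (mul_nonpos_of_nonneg_of_nonpos ht hj).trans (hc0 j)
  · rw [sum_sub_distrib, ← mul_sum]
    linarith [mul_nonneg ht hsum]
  · obtain rfl : j = i := not_not.1 hj
    simp [t, div_mul_cancel₀ _ hi.ne']
  · simp only [sub_smul, mul_smul, sum_sub_distrib, ← smul_sum, hw, smul_zero, sub_zero]

theorem stmt_0_general (d n k : ℕ) (hk1 : 1 ≤ k) (hkn : k ≤ n)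
    (a : Fin n → Fin d → ℤ)
    (aR : Fin n → Fin d → ℝ) (haR : ∀ μ i, aR μ i = (a μ i : ℝ))
    (ℓ : Fin n → ℤ) (hℓpos : ∀ μ, 0 < ℓ μ)
    (ℓs : Fin n → ℤ) (hℓs : ∀ μ : Fin n, ℓs μ = if (μ : ℕ) < k then ℓ μ else -ℓ μ)
    (hlat : ∀ l : Fin n → ℤ, (∑ μ, l μ • a μ) = 0 ↔ ∃ z : ℤ, l = z • ℓs)
    (hge : ∑ μ ∈ Finset.univ.filter (fun μ : Fin n => (μ : ℕ) < k), ℓ μ ≥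
           ∑ μ ∈ Finset.univ.filter (fun μ : Fin n => ¬ (μ : ℕ) < k), ℓ μ) :
    convexHull ℝ ({0} ∪ Set.range aR) =
      ⋃ i : {i : Fin n // (i : ℕ) < k},
        convexHull ℝ ({0} ∪ aR '' {ν : Fin n | ν ≠ i.1}) := by
  have hrel : ∑ μ, (ℓs μ : ℝ) • aR μ = 0 := by
    have h := (hlat ℓs).2 ⟨1, (one_smul _ _).symm⟩
    funext i
    simpa [Finset.sum_apply, haR] using congrArg (fun z : ℤ => (z : ℝ)) (congrFun h i)
  have hsum : 0 ≤ ∑ μ, (ℓs μ : ℝ) := by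
    have hsplit : ∑ μ, ℓs μ = ∑ μ ∈ Finset.univ.filter (fun μ : Fin n => (μ : ℕ) < k), ℓ μ -
        ∑ μ ∈ Finset.univ.filter (fun μ : Fin n => ¬ (μ : ℕ) < k), ℓ μ := by
      simp only [hℓs, Finset.sum_ite, Finset.sum_neg_distrib, sub_eq_add_neg]
    exact_mod_cast (show (0 : ℤ) ≤ ∑ μ, ℓs μ by omega)
  have hpos_iff (μ : Fin n) : 0 < (ℓs μ : ℝ) ↔ (μ : ℕ) < k := by
    rw [hℓs]
    split_ifs with h <;> simp [h, hℓpos μ, (hℓpos μ).le]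
  refine Set.Subset.antisymm (fun x hx => ?_) (Set.iUnion_subset fun i =>
    convexHull_mono (Set.union_subset_union_right _ (Set.image_subset_range _ _)))
  obtain ⟨i, hi, hxi⟩ := exists_pos_mem_convexHull_zero_union_image_ne hrel hsum
    ⟨⟨0, by omega⟩, (hpos_iff _).2 hk1⟩ hx
  exact Set.mem_iUnion.2 ⟨⟨i, (hpos_iff i).1 hi⟩, hxi⟩

/-- Lemma 2.2: if ∑_{i≤k} ℓ_i ≥ ∑_{j>k} ℓ_j then Δ(A) = ⋃_{i=1}^k Δ_i. -/
theorem stmt_0 (d n k : ℕ) (hd : 1 ≤ d) (hn : 2 ≤ n) (hk1 : 1 ≤ k) (hkn : k ≤ n)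
    (a : Fin n → Fin d → ℤ)
    (aR : Fin n → Fin d → ℝ) (haR : ∀ μ i, aR μ i = (a μ i : ℝ))
    (hdim : Module.finrank ℝ (Submodule.span ℝ (Set.range aR)) = n - 1)
    (hindep : ∀ μ₀ : Fin n,
      LinearIndependent ℝ (fun ν : {ν : Fin n // ν ≠ μ₀} => aR ν.1))
    (ℓ : Fin n → ℤ) (hℓpos : ∀ μ, 0 < ℓ μ)
    (ℓs : Fin n → ℤ) (hℓs : ∀ μ : Fin n, ℓs μ = if (μ : ℕ) < k then ℓ μ else -ℓ μ)
    (hlat : ∀ l : Fin n → ℤ, (∑ μ, l μ • a μ) = 0 ↔ ∃ z : ℤ, l = z • ℓs)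
    (hge : ∑ μ ∈ Finset.univ.filter (fun μ : Fin n => (μ : ℕ) < k), ℓ μ ≥
           ∑ μ ∈ Finset.univ.filter (fun μ : Fin n => ¬ (μ : ℕ) < k), ℓ μ) :
    convexHull ℝ ({0} ∪ Set.range aR) =
      ⋃ i : {i : Fin n // (i : ℕ) < k},
        convexHull ℝ ({0} ∪ aR '' {ν : Fin n | ν ≠ i.1}) :=
  stmt_0_general d n k hk1 hkn a aR haR ℓ hℓpos ℓs hℓs hlat hge
end

section
/- Assume ∑_{i=1}^k ℓ_i ≥ ∑_{j=k+1}^n ℓ_j. Then for every nonempty subset I ⊆ {1,…,k} one has ⋂_{i∈I} Δ_i = Δ_I, i.e. the intersection of the convex hulls of {0} ∪ {a_μ : μ ≠ i} over i ∈ I equals the convex hull of {0} ∪ {a_μ : μ ∉ I}. (Lemma 2.5.) -/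
/-!
Writing a point of `Δᵢ` as a nonnegative combination of the `a_μ`, `μ ≠ i`, of total weight at
most `1`, any two such expressions of the same point differ by a multiple of the relation `ℓ`,
because the `a_μ` with one index omitted are linearly independent. Take the expression `c` of `x`
in some `Δ_{i₀}` and an index `j ∈ I` maximising `c i / ℓ i`: the expression of `x` in `Δ_j` is
`c - (c j / ℓ j) • ℓ`, whose coordinates on `I` are `≤ 0` since `ℓ > 0` on `I`, hence vanish.
-/

def cornerSimplex (𝕜 : Type*) {ι : Type*} [Semiring 𝕜] [PartialOrder 𝕜] [Fintype ι]
    (S : Set ι) : Set (ι → 𝕜) :=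
  {c | (∀ μ, 0 ≤ c μ) ∧ (∀ μ ∉ S, c μ = 0) ∧ ∑ μ, c μ ≤ 1}

section CornerSimplex

variable {𝕜 E ι : Type*} [Field 𝕜] [LinearOrder 𝕜] [IsStrictOrderedRing 𝕜]
  [AddCommGroup E] [Module 𝕜 E] [Fintype ι]

lemma convex_cornerSimplex (S : Set ι) : Convex 𝕜 (cornerSimplex 𝕜 S) := by
  rintro c ⟨hc₀, hcS, hc₁⟩ e ⟨he₀, heS, he₁⟩ p q hp hq hpq
  refine ⟨fun μ => ?_, fun μ hμ => ?_, ?_⟩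
  · simp only [Pi.add_apply, Pi.smul_apply, smul_eq_mul]
    exact add_nonneg (mul_nonneg hp (hc₀ μ)) (mul_nonneg hq (he₀ μ))
  · simp [hcS μ hμ, heS μ hμ]
  · calc ∑ μ, (p • c + q • e) μ = p * ∑ μ, c μ + q * ∑ μ, e μ := by
          simp [Finset.sum_add_distrib, Finset.mul_sum]
      _ ≤ p * 1 + q * 1 := by gcongr
      _ = 1 := by rw [mul_one, mul_one, hpq]

lemma convexHull_zero_union_image_eq (v : ι → E) (S : Set ι) :
    convexHull 𝕜 ({0} ∪ v '' S) = Fintype.linearCombination 𝕜 v '' cornerSimplex 𝕜 S := by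
  classical
  apply subset_antisymm
  · refine convexHull_min ?_ ((convex_cornerSimplex S).linear_image _)
    rintro _ (rfl | ⟨μ, hμ, rfl⟩)
    · exact ⟨0, ⟨fun _ => le_rfl, fun _ _ => rfl, by simp⟩, map_zero _⟩
    · refine ⟨Pi.single μ 1, ⟨fun ν => ?_, fun ν hν => ?_, by simp⟩, by simp⟩
      · by_cases h : ν = μ <;> simp [h]
      · simp [show ν ≠ μ by rintro rfl; exact hν hμ]
  · rintro _ ⟨c, ⟨hc₀, hcS, hc₁⟩, rfl⟩
    -- the missing weight `1 - ∑ c` goes to the vertex `0`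
    refine mem_convexHull_of_exists_fintype (ι := Option ι) (fun o => o.elim (1 - ∑ μ, c μ) c)
      (fun o => o.elim 0 fun μ => if μ ∈ S then v μ else 0) (fun o => ?_)
      (by simp [Fintype.sum_option]) (fun o => ?_) ?_
    · cases o with
      | none => simpa using hc₁
      | some μ => exact hc₀ μ
    · cases o with
      | none => exact Or.inl rfl
      | some μ =>
        by_cases hμ : μ ∈ S <;> simp only [hμ, if_true, if_false, Option.elim]
        exacts [Or.inr ⟨μ, hμ, rfl⟩, Or.inl rfl]
    · simp only [Fintype.sum_option, Option.elim, smul_zero, zero_add,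
        Fintype.linearCombination_apply]
      refine Finset.sum_congr rfl fun μ _ => ?_
      by_cases hμ : μ ∈ S <;> simp [hμ, hcS]

end CornerSimplex

section Relations

variable {𝕜 E ι : Type*} [Field 𝕜] [AddCommGroup E] [Module 𝕜 E] [Fintype ι]

lemma eq_smul_of_linearCombination_eq_zero {v : ι → E} {μ₀ : ι}
    (hli : LinearIndependent 𝕜 fun ν : {ν // ν ≠ μ₀} => v ν) {r s : ι → 𝕜}
    (hr : Fintype.linearCombination 𝕜 v r = 0) (hs : Fintype.linearCombination 𝕜 v s = 0)
    (hs₀ : s μ₀ ≠ 0) : r = (r μ₀ / s μ₀) • s := by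
  classical
  set q := r - (r μ₀ / s μ₀) • s
  have hq₀ : q μ₀ = 0 := by simp [q, div_mul_cancel₀ _ hs₀]
  have hq : Fintype.linearCombination 𝕜 v q = 0 := by simp [q, hr, hs]
  have hq_ne : ∀ ν : {ν // ν ≠ μ₀}, q ν = 0 := by
    refine Fintype.linearIndependent_iff.mp hli (fun ν => q ν) ?_
    rw [Fintype.linearCombination_apply, Fintype.sum_eq_add_sum_subtype_ne _ μ₀, hq₀,
      zero_smul, zero_add] at hq
    exact hq
  rw [← sub_eq_zero]
  funext ν
  by_cases hν : ν = μ₀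
  · subst hν; exact hq₀
  · exact hq_ne ⟨ν, hν⟩

end Relations

section Intersection

variable {𝕜 E ι : Type*} [Field 𝕜] [LinearOrder 𝕜] [IsStrictOrderedRing 𝕜]
  [AddCommGroup E] [Module 𝕜 E] [Fintype ι]

theorem iInter_convexHull_zero_union_image_ne {v : ι → E} {I : Set ι} (hI : I.Nonempty)
    (hli : ∀ i ∈ I, LinearIndependent 𝕜 fun ν : {ν // ν ≠ i} => v ν) {ℓ : ι → 𝕜}
    (hℓ : Fintype.linearCombination 𝕜 v ℓ = 0) (hℓI : ∀ i ∈ I, 0 < ℓ i) :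
    ⋂ i ∈ I, convexHull 𝕜 ({0} ∪ v '' {ν | ν ≠ i}) = convexHull 𝕜 ({0} ∪ v '' {ν | ν ∉ I}) := by
  refine subset_antisymm (fun x hx => ?_) (Set.subset_iInter₂ fun i hi => ?_)
  · simp only [Set.mem_iInter₂, convexHull_zero_union_image_eq (𝕜 := 𝕜)] at hx
    obtain ⟨i₀, hi₀⟩ := hI
    obtain ⟨c, hc, rfl⟩ := hx i₀ hi₀
    obtain ⟨j, hj, hjmax⟩ := Set.exists_max_image I (fun i => c i / ℓ i) I.toFinite ⟨i₀, hi₀⟩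
    obtain ⟨e, ⟨he₀, heS, he₁⟩, hex⟩ := hx j hj
    have hej : e j = 0 := heS j (by simp)
    have hrel : Fintype.linearCombination 𝕜 v (e - c) = 0 := by rw [map_sub, hex, sub_self]
    have hec := congrFun (eq_smul_of_linearCombination_eq_zero (hli j hj) hrel hℓ (hℓI j hj).ne')
    rw [convexHull_zero_union_image_eq]
    refine ⟨e, ⟨he₀, fun i hi => ?_, he₁⟩, hex⟩
    have hi : i ∈ I := by simpa using hi
    have hmax := hjmax i hi
    specialize hec i
    simp only [Pi.sub_apply, Pi.smul_apply, smul_eq_mul, hej] at hec hmax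
    rw [div_le_div_iff₀ (hℓI i hi) (hℓI j hj)] at hmax
    have hci : c i ≤ c j * ℓ i / ℓ j := (le_div_iff₀ (hℓI j hj)).2 hmax
    have hei : e i = c i - c j * ℓ i / ℓ j := by rw [sub_eq_iff_eq_add.mp hec]; ring
    exact le_antisymm (by linarith) (he₀ i)
  · refine convexHull_mono (Set.union_subset_union_right _ (Set.image_mono ?_))
    rintro ν hν rfl
    exact hν hi

end Intersection

theorem stmt_1_general (d n k : ℕ)
    (a : Fin n → Fin d → ℤ)
    (aR : Fin n → Fin d → ℝ) (haR : ∀ μ i, aR μ i = (a μ i : ℝ))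
    (hindep : ∀ μ₀ : Fin n,
      LinearIndependent ℝ (fun ν : {ν : Fin n // ν ≠ μ₀} => aR ν.1))
    (ℓ : Fin n → ℤ) (hℓpos : ∀ μ, 0 < ℓ μ)
    (ℓs : Fin n → ℤ) (hℓs : ∀ μ : Fin n, ℓs μ = if (μ : ℕ) < k then ℓ μ else -ℓ μ)
    (hlat : ∀ l : Fin n → ℤ, (∑ μ, l μ • a μ) = 0 ↔ ∃ z : ℤ, l = z • ℓs)
    (I : Set (Fin n)) (hIne : I.Nonempty) (hIk : ∀ i ∈ I, (i : ℕ) < k) :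
    (⋂ i ∈ I, convexHull ℝ ({0} ∪ aR '' {ν : Fin n | ν ≠ i})) =
      convexHull ℝ ({0} ∪ aR '' {ν : Fin n | ν ∉ I}) := by
  have hrelℤ : ∑ μ, ℓs μ • a μ = 0 := (hlat ℓs).2 ⟨1, (one_smul ℤ ℓs).symm⟩
  have hrel : Fintype.linearCombination ℝ aR (fun μ => (ℓs μ : ℝ)) = 0 := by
    funext i
    have := congrFun hrelℤ i
    simp only [Finset.sum_apply, Pi.smul_apply, smul_eq_mul, Pi.zero_apply] at this
    simp only [Fintype.linearCombination_apply, Finset.sum_apply, Pi.smul_apply, smul_eq_mul,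
      haR, Pi.zero_apply]
    exact_mod_cast this
  refine iInter_convexHull_zero_union_image_ne hIne (fun i _ => hindep i) hrel fun i hi => ?_
  simpa [hℓs i, hIk i hi] using hℓpos i

/-- Lemma 2.5: if ∑_{i≤k} ℓ_i ≥ ∑_{j>k} ℓ_j then ⋂_{i∈I} Δ_i = Δ_I for nonempty I ⊆ {1,…,k}. -/
theorem stmt_1 (d n k : ℕ) (hd : 1 ≤ d) (hn : 2 ≤ n) (hk1 : 1 ≤ k) (hkn : k ≤ n)
    (a : Fin n → Fin d → ℤ)
    (aR : Fin n → Fin d → ℝ) (haR : ∀ μ i, aR μ i = (a μ i : ℝ))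
    (hdim : Module.finrank ℝ (Submodule.span ℝ (Set.range aR)) = n - 1)
    (hindep : ∀ μ₀ : Fin n,
      LinearIndependent ℝ (fun ν : {ν : Fin n // ν ≠ μ₀} => aR ν.1))
    (ℓ : Fin n → ℤ) (hℓpos : ∀ μ, 0 < ℓ μ)
    (ℓs : Fin n → ℤ) (hℓs : ∀ μ : Fin n, ℓs μ = if (μ : ℕ) < k then ℓ μ else -ℓ μ)
    (hlat : ∀ l : Fin n → ℤ, (∑ μ, l μ • a μ) = 0 ↔ ∃ z : ℤ, l = z • ℓs)
    (hge : ∑ μ ∈ Finset.univ.filter (fun μ : Fin n => (μ : ℕ) < k), ℓ μ ≥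
           ∑ μ ∈ Finset.univ.filter (fun μ : Fin n => ¬ (μ : ℕ) < k), ℓ μ)
    (I : Set (Fin n)) (hIne : I.Nonempty) (hIk : ∀ i ∈ I, (i : ℕ) < k) :
    (⋂ i ∈ I, convexHull ℝ ({0} ∪ aR '' {ν : Fin n | ν ≠ i})) =
      convexHull ℝ ({0} ∪ aR '' {ν : Fin n | ν ∉ I}) :=
  stmt_1_general d n k a aR haR hindep ℓ hℓpos ℓs hℓs hlat I hIne hIk
end

section
/- For every i ∈ {1,…,k}, the subgroup of ℤ^d generated by {a_μ : μ ∈ {1,…,n}, μ ≠ i} has index exactly ℓ_i in the subgroup ℤA of ℤ^d generated by a_1, …, a_n. (Equation (2.11), the content of Lemma 2.10 on the normalized volume of Δ_i.) -/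
/-!
Let `B` be the subgroup generated by the `a_μ` with `μ ≠ i`. Since `ℤA = B + ℤ a_i`, the index of
`B` in `ℤA` is the order of `a_i` in `ℤ^d / B`. A multiple `z • a_i` lies in `B` exactly when some
integer relation among the `a_μ` has `i`-th coefficient `z`; as every relation is a multiple of `ℓ`,
this happens iff `ℓ_i ∣ z`, so that order is `ℓ_i`.
-/

open Finset

theorem AddSubgroup.relIndex_closure_insert {G : Type*} [AddCommGroup G] (s : Set G) (x : G) :
    (closure s).relIndex (closure (insert x s)) = addOrderOf (x : G ⧸ closure s) := by
  have hker := relIndex_ker (closure (insert x s)) (QuotientAddGroup.mk' (closure s))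
  rw [QuotientAddGroup.ker_mk'] at hker
  rw [hker, Set.insert_eq, closure_union, map_sup,
    (map_eq_bot_iff _).2 (QuotientAddGroup.ker_mk' _).ge, sup_bot_eq, AddMonoidHom.map_closure,
    Set.image_singleton, ← zmultiples_eq_closure, Nat.card_zmultiples]
  rfl

theorem addOrderOf_eq_of_zsmul_eq_zero_iff {G : Type*} [AddGroup G] {x : G} {m : ℤ} (hm : 0 ≤ m)
    (h : ∀ z : ℤ, z • x = 0 ↔ m ∣ z) : (addOrderOf x : ℤ) = m :=
  Int.dvd_antisymm (Nat.cast_nonneg _) hm (addOrderOf_dvd_iff_zsmul_eq_zero.2 ((h m).2 dvd_rfl))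
    ((h _).1 (addOrderOf_dvd_iff_zsmul_eq_zero.1 dvd_rfl))

theorem zsmul_mem_closure_image_ne_iff {ι M : Type*} [Fintype ι] [DecidableEq ι] [AddCommGroup M]
    (a : ι → M) (i : ι) (z : ℤ) :
    z • a i ∈ AddSubgroup.closure (a '' {ν | ν ≠ i}) ↔
      ∃ l : ι → ℤ, ∑ μ, l μ • a μ = 0 ∧ l i = z := by
  rw [← Submodule.span_int_eq_addSubgroupClosure, Submodule.mem_toAddSubgroup, Set.image_eq_range,
    Submodule.mem_span_range_iff_exists_fun]
  constructor
  · rintro ⟨c, hc⟩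
    refine ⟨fun μ => if h : μ = i then z else -c ⟨μ, h⟩, ?_, by simp⟩
    rw [Fintype.sum_eq_add_sum_subtype_ne _ i]
    have hne : ∀ x : {μ // μ ≠ i}, (if h : (x : ι) = i then z else -c ⟨x, h⟩) • a x =
        -(c ⟨x, x.2⟩ • a x) := fun x => by rw [dif_neg x.2, neg_smul]
    simp only [dite_true, hne, sum_neg_distrib, add_neg_eq_zero, ← hc]
    rfl
  · rintro ⟨l, hl, rfl⟩
    refine ⟨fun ν => -l ν, ?_⟩
    rw [Fintype.sum_eq_add_sum_subtype_ne _ i, add_eq_zero_iff_eq_neg] at hl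
    simp only [neg_smul, sum_neg_distrib, hl]
    rfl

theorem stmt_2_general (d n k : ℕ)
    (a : Fin n → Fin d → ℤ)
    (ℓ : Fin n → ℤ) (hℓpos : ∀ μ, 0 < ℓ μ)
    (ℓs : Fin n → ℤ) (hℓs : ∀ μ : Fin n, ℓs μ = if (μ : ℕ) < k then ℓ μ else -ℓ μ)
    (hlat : ∀ l : Fin n → ℤ, (∑ μ, l μ • a μ) = 0 ↔ ∃ z : ℤ, l = z • ℓs)
    (i : Fin n) (hik : (i : ℕ) < k) :
    ((AddSubgroup.closure (a '' {ν : Fin n | ν ≠ i})).relIndex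
        (AddSubgroup.closure (Set.range a)) : ℤ) = ℓ i := by
  have hℓsi : ℓs i = ℓ i := by simp [hℓs, hik]
  have hmem : ∀ z : ℤ, z • a i ∈ AddSubgroup.closure (a '' {ν | ν ≠ i}) ↔ ℓ i ∣ z := by
    intro z
    rw [zsmul_mem_closure_image_ne_iff]
    constructor
    · rintro ⟨l, hl, rfl⟩
      obtain ⟨c, rfl⟩ := (hlat l).1 hl
      exact ⟨c, by simp [hℓsi, mul_comm]⟩
    · rintro ⟨c, rfl⟩
      exact ⟨c • ℓs, (hlat _).2 ⟨c, rfl⟩, by simp [hℓsi, mul_comm]⟩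
  rw [← Set.insert_image_compl_eq_range a i, Set.compl_singleton_eq,
    AddSubgroup.relIndex_closure_insert]
  refine addOrderOf_eq_of_zsmul_eq_zero_iff (hℓpos i).le fun z => ?_
  rw [← QuotientAddGroup.mk_zsmul, QuotientAddGroup.eq_zero_iff, hmem]

/-- Lemma 2.10 / Equation (2.11): the subgroup of ℤ^d generated by the a_μ with μ ≠ i
has index ℓ_i in ℤA, for each i ∈ {1,…,k}. -/
theorem stmt_2 (d n k : ℕ) (hd : 1 ≤ d) (hn : 2 ≤ n) (hk1 : 1 ≤ k) (hkn : k ≤ n)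
    (a : Fin n → Fin d → ℤ)
    (aR : Fin n → Fin d → ℝ) (haR : ∀ μ i, aR μ i = (a μ i : ℝ))
    (hdim : Module.finrank ℝ (Submodule.span ℝ (Set.range aR)) = n - 1)
    (hindep : ∀ μ₀ : Fin n,
      LinearIndependent ℝ (fun ν : {ν : Fin n // ν ≠ μ₀} => aR ν.1))
    (ℓ : Fin n → ℤ) (hℓpos : ∀ μ, 0 < ℓ μ)
    (ℓs : Fin n → ℤ) (hℓs : ∀ μ : Fin n, ℓs μ = if (μ : ℕ) < k then ℓ μ else -ℓ μ)
    (hlat : ∀ l : Fin n → ℤ, (∑ μ, l μ • a μ) = 0 ↔ ∃ z : ℤ, l = z • ℓs)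
    (i : Fin n) (hik : (i : ℕ) < k) :
    ((AddSubgroup.closure (a '' {ν : Fin n | ν ≠ i})).relIndex
        (AddSubgroup.closure (Set.range a)) : ℤ) = ℓ i :=
  stmt_2_general d n k a ℓ hℓpos ℓs hℓs hlat i hik
end

section
/- Let i ∈ {1,…,k} and j ∈ {k+1,…,n}, and let h : ℝ^d → ℝ be a linear functional such that h(a_μ) = 0 for every μ ∈ {1,…,n} with μ ∉ {i, j}, and such that h does not vanish identically on the ℝ-span V of a_1,…,a_n. Then h(a_i)·h(a_j) > 0; in particular a_i and a_j lie strictly on the same side of the hyperplane ker h. (The key assertion of Lemma 2.12: the hyperplanes H_{ij} with i ≤ k < j support the facets of Δ(A) through the origin.) -/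
/-!
Applying `h` to the relation `∑ ℓs_μ a_μ = 0` kills every term except two, leaving
`ℓ_i h(a_i) = ℓ_j h(a_j)` with `ℓ_i, ℓ_j > 0`. These two values cannot both vanish, since `h`
would then vanish on all of `V`; hence they are nonzero and of the same sign.
-/

open Finset Submodule

lemma LinearMap.exists_apply_ne_zero_of_exists_mem_span {R M N ι : Type*} [Semiring R]
    [AddCommMonoid M] [AddCommMonoid N] [Module R M] [Module R N] {f : M →ₗ[R] N} {v : ι → M}
    (hf : ∃ x ∈ span R (Set.range v), f x ≠ 0) : ∃ μ, f (v μ) ≠ 0 := by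
  by_contra! hzero
  obtain ⟨x, hx, hfx⟩ := hf
  exact hfx (span_le.2 (Set.range_subset_iff.2 hzero) hx : x ∈ LinearMap.ker f)

lemma LinearMap.apply_sum_smul_eq_pair {R M ι : Type*} [CommSemiring R] [AddCommMonoid M]
    [Module R M] [Fintype ι] [DecidableEq ι] {f : M →ₗ[R] R} {v : ι → M} {c : ι → R}
    (hrel : ∑ μ, c μ • v μ = 0) {i j : ι} (hij : i ≠ j)
    (hvanish : ∀ μ, μ ≠ i → μ ≠ j → f (v μ) = 0) :
    c i * f (v i) + c j * f (v j) = 0 := by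
  have hsum : ∑ μ, c μ * f (v μ) = 0 := by simpa using congrArg f hrel
  rwa [← sum_subset (subset_univ {i, j}), sum_pair hij] at hsum
  intro μ _ hμ
  simp only [mem_insert, mem_singleton, not_or] at hμ
  rw [hvanish μ hμ.1 hμ.2, mul_zero]

lemma mul_pos_of_mul_add_mul_eq_zero {K : Type*} [Field K] [LinearOrder K]
    [IsStrictOrderedRing K] {a b x y : K} (ha : 0 < a) (hb : b < 0) (hxy : a * x + b * y = 0)
    (hne : x ≠ 0 ∨ y ≠ 0) : 0 < x * y := by
  have hy : y ≠ 0 := by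
    rintro rfl
    simp only [mul_zero, add_zero, mul_eq_zero, ha.ne', false_or] at hxy
    simp [hxy] at hne
  have hay : 0 < a * (x * y) := by
    have : a * (x * y) = -b * (y * y) := by linear_combination y * hxy
    rw [this]
    exact mul_pos (neg_pos.2 hb) (mul_self_pos.2 hy)
  exact pos_of_mul_pos_right hay ha.le

lemma LinearMap.mul_pos_of_sum_smul_eq_zero {K M ι : Type*} [Field K] [LinearOrder K]
    [IsStrictOrderedRing K] [AddCommGroup M] [Module K M] [Fintype ι] [DecidableEq ι]
    {f : M →ₗ[K] K} {v : ι → M} {c : ι → K} (hrel : ∑ μ, c μ • v μ = 0) {i j : ι}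
    (hi : 0 < c i) (hj : c j < 0) (hvanish : ∀ μ, μ ≠ i → μ ≠ j → f (v μ) = 0)
    (hf : ∃ x ∈ span K (Set.range v), f x ≠ 0) : 0 < f (v i) * f (v j) := by
  have hij : i ≠ j := by rintro rfl; exact (hi.trans hj).false
  refine mul_pos_of_mul_add_mul_eq_zero hi hj (f.apply_sum_smul_eq_pair hrel hij hvanish) ?_
  obtain ⟨μ, hμ⟩ := f.exists_apply_ne_zero_of_exists_mem_span hf
  by_contra! hboth
  by_cases hμi : μ = i
  · exact hμ (hμi ▸ hboth.1)
  by_cases hμj : μ = j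
  · exact hμ (hμj ▸ hboth.2)
  exact hμ (hvanish μ hμi hμj)

lemma Int.cast_sum_smul_eq_zero {ι n : Type*} [Fintype ι] {c : ι → ℤ} {a : ι → n → ℤ}
    (hrel : ∑ μ, c μ • a μ = 0) : ∑ μ, (c μ : ℝ) • (fun x => (a μ x : ℝ)) = 0 := by
  ext x
  simpa using congrArg (fun w : n → ℤ => (w x : ℝ)) hrel

theorem stmt_3_general (d n k : ℕ)
    (a : Fin n → Fin d → ℤ)
    (aR : Fin n → Fin d → ℝ) (haR : ∀ μ i, aR μ i = (a μ i : ℝ))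
    (ℓ : Fin n → ℤ) (hℓpos : ∀ μ, 0 < ℓ μ)
    (ℓs : Fin n → ℤ) (hℓs : ∀ μ : Fin n, ℓs μ = if (μ : ℕ) < k then ℓ μ else -ℓ μ)
    (hlat : ∀ l : Fin n → ℤ, (∑ μ, l μ • a μ) = 0 ↔ ∃ z : ℤ, l = z • ℓs)
    (i j : Fin n) (hik : (i : ℕ) < k) (hjk : k ≤ (j : ℕ))
    (h : (Fin d → ℝ) →ₗ[ℝ] ℝ)
    (hvanish : ∀ μ : Fin n, μ ≠ i → μ ≠ j → h (aR μ) = 0)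
    (hnontriv : ∃ x ∈ Submodule.span ℝ (Set.range aR), h x ≠ 0) :
    0 < h (aR i) * h (aR j) := by
  have haR' : aR = fun μ x => (a μ x : ℝ) := funext fun μ => funext (haR μ)
  have hrel : ∑ μ, (ℓs μ : ℝ) • aR μ = 0 := by
    rw [haR']
    exact Int.cast_sum_smul_eq_zero ((hlat ℓs).2 ⟨1, (one_smul ℤ ℓs).symm⟩)
  have hi : 0 < (ℓs i : ℝ) := by
    rw [hℓs, if_pos hik]
    exact_mod_cast hℓpos i
  have hj : (ℓs j : ℝ) < 0 := by
    rw [hℓs, if_neg (not_lt.2 hjk), Int.cast_neg, neg_neg_iff_pos]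
    exact_mod_cast hℓpos j
  exact h.mul_pos_of_sum_smul_eq_zero hrel hi hj hvanish hnontriv

/-- Lemma 2.12 (first assertion): for i ≤ k < j, a linear functional vanishing on all
a_μ with μ ∉ {i,j} but not identically on V takes values of the same strict sign at
a_i and a_j. -/
theorem stmt_3 (d n k : ℕ) (hd : 1 ≤ d) (hn : 2 ≤ n) (hk1 : 1 ≤ k) (hkn : k ≤ n)
    (a : Fin n → Fin d → ℤ)
    (aR : Fin n → Fin d → ℝ) (haR : ∀ μ i, aR μ i = (a μ i : ℝ))
    (hdim : Module.finrank ℝ (Submodule.span ℝ (Set.range aR)) = n - 1)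
    (hindep : ∀ μ₀ : Fin n,
      LinearIndependent ℝ (fun ν : {ν : Fin n // ν ≠ μ₀} => aR ν.1))
    (ℓ : Fin n → ℤ) (hℓpos : ∀ μ, 0 < ℓ μ)
    (ℓs : Fin n → ℤ) (hℓs : ∀ μ : Fin n, ℓs μ = if (μ : ℕ) < k then ℓ μ else -ℓ μ)
    (hlat : ∀ l : Fin n → ℤ, (∑ μ, l μ • a μ) = 0 ↔ ∃ z : ℤ, l = z • ℓs)
    (i j : Fin n) (hik : (i : ℕ) < k) (hjk : k ≤ (j : ℕ))
    (h : (Fin d → ℝ) →ₗ[ℝ] ℝ)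
    (hvanish : ∀ μ : Fin n, μ ≠ i → μ ≠ j → h (aR μ) = 0)
    (hnontriv : ∃ x ∈ Submodule.span ℝ (Set.range aR), h x ≠ 0) :
    0 < h (aR i) * h (aR j) :=
  stmt_3_general d n k a aR haR ℓ hℓpos ℓs hℓs hlat i j hik hjk h hvanish hnontriv
end

section
/- Suppose β is nonresonant and let v ∈ ℂ^n satisfy ∑_{μ=1}^n v_μ a_μ = β (the a_μ regarded as vectors in ℂ^d). If v_i is an integer for some i ∈ {1,…,k}, then v_j is not an integer for any j ∈ {k+1,…,n}. (Lemma 2.13.) -/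
/-! Cancelling the integer coefficients `v i` and `v j` by an element of `ℤA` moves `β` into the
span of the remaining `a_μ`, which nonresonance forbids. -/

theorem Submodule.sum_smul_mem_span_image {ι R M : Type*} [Fintype ι] [Semiring R]
    [AddCommMonoid M] [Module R M] (f : ι → M) {s : Set ι} (w : ι → R)
    (hw : ∀ μ ∉ s, w μ = 0) :
    ∑ μ, w μ • f μ ∈ Submodule.span R (f '' s) := by
  refine Submodule.sum_mem _ fun μ _ => ?_
  by_cases hμ : μ ∈ s
  · exact Submodule.smul_mem _ _ (Submodule.subset_span ⟨μ, hμ, rfl⟩)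
  · simp [hw μ hμ]

theorem exists_int_add_sum_smul_mem_span {ι R M : Type*} [Fintype ι] [Ring R]
    [AddCommGroup M] [Module R M] (f : ι → M) (v : ι → R) (s : Set ι)
    (hv : ∀ μ ∉ s, ∃ m : ℤ, v μ = m) :
    ∃ c : ι → ℤ, ∑ μ, v μ • f μ + ∑ μ, (c μ : R) • f μ ∈ Submodule.span R (f '' s) := by
  classical
  choose! m hm using hv
  refine ⟨fun μ => if μ ∈ s then 0 else -m μ, ?_⟩
  rw [← Finset.sum_add_distrib]
  simp_rw [← add_smul]
  refine Submodule.sum_smul_mem_span_image f _ fun μ hμ => ?_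
  simp [hμ, hm μ hμ]

theorem stmt_5_general (d n k : ℕ)
    (aC : Fin n → Fin d → ℂ)
    (β : Fin d → ℂ)
    (hnr : ∀ i j : Fin n, (i : ℕ) < k → k ≤ (j : ℕ) → ∀ c : Fin n → ℤ,
      β + ∑ μ, (c μ : ℂ) • aC μ ∉
        Submodule.span ℂ (aC '' {μ : Fin n | μ ≠ i ∧ μ ≠ j}))
    (v : Fin n → ℂ) (hv : (∑ μ, v μ • aC μ) = β)
    (i : Fin n) (hik : (i : ℕ) < k) (hvi : ∃ m : ℤ, v i = (m : ℂ))
    (j : Fin n) (hjk : k ≤ (j : ℕ)) :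
    ¬ ∃ m : ℤ, v j = (m : ℂ) := by
  intro hvj
  have hv_int : ∀ μ ∉ {μ : Fin n | μ ≠ i ∧ μ ≠ j}, ∃ m : ℤ, v μ = m := by
    intro μ hμ
    rcases (by simpa [or_iff_not_imp_left] using hμ : μ = i ∨ μ = j) with rfl | rfl
    exacts [hvi, hvj]
  obtain ⟨c, hc⟩ := exists_int_add_sum_smul_mem_span aC v _ hv_int
  exact hnr i j hik hjk c (hv ▸ hc)

/-- Lemma 2.13: if β is nonresonant and ∑ v_μ a_μ = β with v_i ∈ ℤ for some i ≤ k,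
then v_j ∉ ℤ for all j > k. -/
theorem stmt_5 (d n k : ℕ) (hd : 1 ≤ d) (hn : 2 ≤ n) (hk1 : 1 ≤ k) (hkn : k ≤ n)
    (a : Fin n → Fin d → ℤ)
    (aR : Fin n → Fin d → ℝ) (haR : ∀ μ i, aR μ i = (a μ i : ℝ))
    (hdim : Module.finrank ℝ (Submodule.span ℝ (Set.range aR)) = n - 1)
    (hindep : ∀ μ₀ : Fin n,
      LinearIndependent ℝ (fun ν : {ν : Fin n // ν ≠ μ₀} => aR ν.1))
    (ℓ : Fin n → ℤ) (hℓpos : ∀ μ, 0 < ℓ μ)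
    (ℓs : Fin n → ℤ) (hℓs : ∀ μ : Fin n, ℓs μ = if (μ : ℕ) < k then ℓ μ else -ℓ μ)
    (hlat : ∀ l : Fin n → ℤ, (∑ μ, l μ • a μ) = 0 ↔ ∃ z : ℤ, l = z • ℓs)
    (aC : Fin n → Fin d → ℂ) (haC : ∀ μ i, aC μ i = (a μ i : ℂ))
    (β : Fin d → ℂ) (hβ : β ∈ Submodule.span ℂ (Set.range aC))
    (hnr : ∀ i j : Fin n, (i : ℕ) < k → k ≤ (j : ℕ) → ∀ c : Fin n → ℤ,
      β + ∑ μ, (c μ : ℂ) • aC μ ∉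
        Submodule.span ℂ (aC '' {μ : Fin n | μ ≠ i ∧ μ ≠ j}))
    (v : Fin n → ℂ) (hv : (∑ μ, v μ • aC μ) = β)
    (i : Fin n) (hik : (i : ℕ) < k) (hvi : ∃ m : ℤ, v i = (m : ℂ))
    (j : Fin n) (hjk : k ≤ (j : ℕ)) :
    ¬ ∃ m : ℤ, v j = (m : ℂ) :=
  stmt_5_general d n k aC β hnr v hv i hik hvi j hjk
end

section
/- For each v ∈ E_β there exists a unique integer z₀ such that v + z₀·ℓ ∈ E'_β (where ℓ ∈ ℤ^n is regarded as a vector in ℂ^n and added coordinatewise). (Lemma 3.1.) -/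
/-!
Since `∑ ℓs_μ a_μ = 0`, every shift `v + zℓ` still solves `∑ v_μ a_μ = β`. For `i ≤ k` the shift
moves a coordinate `v_i` by `zℓ_i`, so only the coordinates with integer value `c_i` matter, and
`v + zℓ ∈ E'_β` says `c_i + zℓ_i ≥ 0` for all of them and `c_i + zℓ_i < ℓ_i` for one. Writing
`f_i = -⌊c_i / ℓ_i⌋`, this reads `f_i ≤ z` for all such `i` and `f_i = z` for one, i.e. `z` is the
maximum of the `f_i`, which exists because `v ∈ E_β` provides one integer coordinate.
-/

open Finset

theorem Finset.existsUnique_forall_le_exists_eq {ι α : Type*} [LinearOrder α] (T : Finset ι)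
    (hT : T.Nonempty) (f : ι → α) :
    ∃! z : α, (∀ i ∈ T, f i ≤ z) ∧ ∃ i ∈ T, f i = z := by
  refine ⟨T.sup' hT f, ⟨fun i hi => le_sup' f hi, exists_mem_eq_sup' hT f |>.imp
    fun i ⟨hi, h⟩ => ⟨hi, h.symm⟩⟩, ?_⟩
  rintro z ⟨hle, i, hi, rfl⟩
  exact le_antisymm (le_sup' f hi) (sup'_le hT f hle)

theorem Int.neg_ediv_le_iff {c L : ℤ} (hL : 0 < L) (z : ℤ) : -(c / L) ≤ z ↔ 0 ≤ c + z * L := by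
  rw [neg_le, Int.le_ediv_iff_mul_le hL]
  constructor <;> intro h <;> linarith

theorem Int.neg_ediv_eq_iff {c L : ℤ} (hL : 0 < L) (z : ℤ) :
    -(c / L) = z ↔ 0 ≤ c + z * L ∧ c + z * L < L := by
  rw [le_antisymm_iff, Int.neg_ediv_le_iff hL, le_neg, Int.ediv_le_iff_le_mul hL]
  constructor <;> rintro ⟨h₁, h₂⟩ <;> constructor <;> linarith

theorem existsUnique_forall_nonneg_exists_lt {ι : Type*} (T : Finset ι) (hT : T.Nonempty)
    (c ℓ : ι → ℤ) (hℓ : ∀ i, 0 < ℓ i) :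
    ∃! z : ℤ, (∀ i ∈ T, 0 ≤ c i + z * ℓ i) ∧ ∃ i ∈ T, 0 ≤ c i + z * ℓ i ∧ c i + z * ℓ i < ℓ i := by
  simpa only [Int.neg_ediv_le_iff (hℓ _), Int.neg_ediv_eq_iff (hℓ _)] using
    T.existsUnique_forall_le_exists_eq hT fun i => -(c i / ℓ i)

theorem Complex.eq_floor_re_of_add_intCast_eq {w : ℂ} {t m : ℤ} (h : w + t = m) :
    w = ⌊w.re⌋ ∧ ⌊w.re⌋ + t = m := by
  have hw : w = ((m - t : ℤ) : ℂ) := by push_cast; linear_combination h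
  have : ⌊w.re⌋ = m - t := by simp [hw]
  exact ⟨by rw [this, hw], by omega⟩

theorem Complex.exists_natCast_lt_eq_add_intCast_iff (w : ℂ) (t L : ℤ) :
    (∃ b : ℕ, (b : ℤ) < L ∧ w + t = b) ↔ w = ⌊w.re⌋ ∧ 0 ≤ ⌊w.re⌋ + t ∧ ⌊w.re⌋ + t < L := by
  constructor
  · rintro ⟨b, hbL, hb⟩
    obtain ⟨hw, hwb⟩ := eq_floor_re_of_add_intCast_eq (m := b) (by exact_mod_cast hb)
    exact ⟨hw, by omega, by omega⟩
  · rintro ⟨hw, h0, hL⟩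
    refine ⟨(⌊w.re⌋ + t).toNat, by omega, ?_⟩
    rw [← Int.cast_natCast, Int.toNat_of_nonneg h0, Int.cast_add, ← hw]

theorem Complex.forall_add_intCast_ne_of_neg_iff (w : ℂ) (t : ℤ) :
    (∀ m : ℤ, m < 0 → w + t ≠ m) ↔ (w = ⌊w.re⌋ → 0 ≤ ⌊w.re⌋ + t) := by
  constructor
  · intro h hw
    by_contra! hneg
    exact h _ hneg (by rw [hw]; push_cast; simp)
  · rintro h m hm hwm
    obtain ⟨hw, hwm⟩ := eq_floor_re_of_add_intCast_eq hwm
    have := h hw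
    omega

theorem Finset.sum_add_mul_smul_of_sum_smul_eq_zero {ι R M : Type*} [CommSemiring R]
    [AddCommMonoid M] [Module R M] (s : Finset ι) (v r : ι → R) (x : ι → M) (t : R)
    (h : ∑ μ ∈ s, r μ • x μ = 0) :
    ∑ μ ∈ s, (v μ + t * r μ) • x μ = ∑ μ ∈ s, v μ • x μ := by
  simp only [add_smul, mul_smul, sum_add_distrib, ← smul_sum, h, smul_zero, add_zero]

section IntegerCoordinates

variable {ι : Type*} [Fintype ι] (p : ι → Prop) [DecidablePred p] (v : ι → ℂ)

/-- `v i = ⌊(v i).re⌋` says that `v i` is an integer, whose value is then `⌊(v i).re⌋`. -/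
noncomputable def integerCoords : Finset ι := univ.filter fun i => p i ∧ v i = ⌊(v i).re⌋

variable {p v} {w : ι → ℂ} {ℓ : ι → ℤ} {z : ℤ}

theorem exists_natCast_lt_eq_iff_integerCoords
    (hw : ∀ i, p i → w i = v i + ((z * ℓ i : ℤ) : ℂ)) :
    (∃ i, p i ∧ ∃ b : ℕ, (b : ℤ) < ℓ i ∧ w i = b) ↔
      ∃ i ∈ integerCoords p v, 0 ≤ ⌊(v i).re⌋ + z * ℓ i ∧ ⌊(v i).re⌋ + z * ℓ i < ℓ i := by
  simp only [integerCoords, mem_filter, mem_univ, true_and, and_assoc]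
  exact exists_congr fun i => and_congr_right fun hi => by
    rw [hw i hi, Complex.exists_natCast_lt_eq_add_intCast_iff]

theorem forall_ne_intCast_of_neg_iff_integerCoords
    (hw : ∀ i, p i → w i = v i + ((z * ℓ i : ℤ) : ℂ)) :
    (∀ i, p i → ∀ m : ℤ, m < 0 → w i ≠ m) ↔
      ∀ i ∈ integerCoords p v, 0 ≤ ⌊(v i).re⌋ + z * ℓ i := by
  simp only [integerCoords, mem_filter, mem_univ, true_and, and_imp]
  exact forall_congr' fun i => forall_congr' fun hi => by
    rw [hw i hi, Complex.forall_add_intCast_ne_of_neg_iff]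

end IntegerCoordinates

theorem stmt_6_general (d n k : ℕ)
    (a : Fin n → Fin d → ℤ)
    (ℓ : Fin n → ℤ) (hℓpos : ∀ μ, 0 < ℓ μ)
    (ℓs : Fin n → ℤ) (hℓs : ∀ μ : Fin n, ℓs μ = if (μ : ℕ) < k then ℓ μ else -ℓ μ)
    (hlat : ∀ l : Fin n → ℤ, (∑ μ, l μ • a μ) = 0 ↔ ∃ z : ℤ, l = z • ℓs)
    (aC : Fin n → Fin d → ℂ) (haC : ∀ μ i, aC μ i = (a μ i : ℂ))
    (E E' : (Fin d → ℂ) → Set (Fin n → ℂ))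
    (hE : ∀ (γ : Fin d → ℂ) (v : Fin n → ℂ), v ∈ E γ ↔
      (∑ μ, v μ • aC μ) = γ ∧
        ∃ i : Fin n, (i : ℕ) < k ∧ ∃ b : ℕ, (b : ℤ) < ℓ i ∧ v i = (b : ℂ))
    (hE' : ∀ (γ : Fin d → ℂ) (v : Fin n → ℂ), v ∈ E' γ ↔
      v ∈ E γ ∧ ∀ i : Fin n, (i : ℕ) < k → ∀ m : ℤ, m < 0 → v i ≠ (m : ℂ))
    (β : Fin d → ℂ)
    (v : Fin n → ℂ) (hv : v ∈ E β) :
    ∃! z₀ : ℤ, (fun μ => v μ + ((z₀ * ℓs μ : ℤ) : ℂ)) ∈ E' β := by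
  obtain ⟨hvβ, hv⟩ := (hE β v).1 hv
  have hrel : ∑ μ, (ℓs μ : ℂ) • aC μ = 0 := by
    funext j
    have := congrFun ((hlat ℓs).2 ⟨1, (one_smul _ _).symm⟩) j
    simp only [Finset.sum_apply, Pi.smul_apply, smul_eq_mul, haC, Pi.zero_apply] at this ⊢
    exact_mod_cast this
  have hshift (z : ℤ) (i : Fin n) (hi : (i : ℕ) < k) :
      v i + ((z * ℓs i : ℤ) : ℂ) = v i + ((z * ℓ i : ℤ) : ℂ) := by
    rw [hℓs, if_pos hi]
  have hsum (z : ℤ) : ∑ μ, (v μ + ((z * ℓs μ : ℤ) : ℂ)) • aC μ = β := by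
    simpa only [Int.cast_mul, hvβ] using
      sum_add_mul_smul_of_sum_smul_eq_zero univ v (fun μ => (ℓs μ : ℂ)) aC z hrel
  have hT : (integerCoords (fun i : Fin n => (i : ℕ) < k) v).Nonempty := by
    obtain ⟨i, hi, -⟩ := (exists_natCast_lt_eq_iff_integerCoords (v := v) (w := v) (ℓ := ℓ) (z := 0) fun i _ => by simp).1 hv
    exact ⟨i, hi⟩
  have key (z : ℤ) : (fun μ => v μ + ((z * ℓs μ : ℤ) : ℂ)) ∈ E' β ↔
      (∀ i ∈ integerCoords (fun i : Fin n => (i : ℕ) < k) v, 0 ≤ ⌊(v i).re⌋ + z * ℓ i) ∧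
        ∃ i ∈ integerCoords (fun i : Fin n => (i : ℕ) < k) v,
          0 ≤ ⌊(v i).re⌋ + z * ℓ i ∧ ⌊(v i).re⌋ + z * ℓ i < ℓ i := by
    simp only [hE', hE, hsum, true_and, exists_natCast_lt_eq_iff_integerCoords (hshift z),
      forall_ne_intCast_of_neg_iff_integerCoords (hshift z)]
    exact and_comm
  simpa only [key] using existsUnique_forall_nonneg_exists_lt _ hT _ ℓ hℓpos

/-- Lemma 3.1: for each v ∈ E_β there is a unique z₀ ∈ ℤ with v + z₀ℓ ∈ E'_β. -/
theorem stmt_6 (d n k : ℕ) (hd : 1 ≤ d) (hn : 2 ≤ n) (hk1 : 1 ≤ k) (hkn : k ≤ n)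
    (a : Fin n → Fin d → ℤ)
    (aR : Fin n → Fin d → ℝ) (haR : ∀ μ i, aR μ i = (a μ i : ℝ))
    (hdim : Module.finrank ℝ (Submodule.span ℝ (Set.range aR)) = n - 1)
    (hindep : ∀ μ₀ : Fin n,
      LinearIndependent ℝ (fun ν : {ν : Fin n // ν ≠ μ₀} => aR ν.1))
    (ℓ : Fin n → ℤ) (hℓpos : ∀ μ, 0 < ℓ μ)
    (ℓs : Fin n → ℤ) (hℓs : ∀ μ : Fin n, ℓs μ = if (μ : ℕ) < k then ℓ μ else -ℓ μ)
    (hlat : ∀ l : Fin n → ℤ, (∑ μ, l μ • a μ) = 0 ↔ ∃ z : ℤ, l = z • ℓs)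
    (aC : Fin n → Fin d → ℂ) (haC : ∀ μ i, aC μ i = (a μ i : ℂ))
    (E E' : (Fin d → ℂ) → Set (Fin n → ℂ))
    (hE : ∀ (γ : Fin d → ℂ) (v : Fin n → ℂ), v ∈ E γ ↔
      (∑ μ, v μ • aC μ) = γ ∧
        ∃ i : Fin n, (i : ℕ) < k ∧ ∃ b : ℕ, (b : ℤ) < ℓ i ∧ v i = (b : ℂ))
    (hE' : ∀ (γ : Fin d → ℂ) (v : Fin n → ℂ), v ∈ E' γ ↔
      v ∈ E γ ∧ ∀ i : Fin n, (i : ℕ) < k → ∀ m : ℤ, m < 0 → v i ≠ (m : ℂ))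
    (β : Fin d → ℂ) (hβ : β ∈ Submodule.span ℂ (Set.range aC))
    (v : Fin n → ℂ) (hv : v ∈ E β) :
    ∃! z₀ : ℤ, (fun μ => v μ + ((z₀ * ℓs μ : ℤ) : ℂ)) ∈ E' β :=
  stmt_6_general d n k a ℓ hℓpos ℓs hℓs hlat aC haC E E' hE hE' β v hv
end

section
/- If v, w ∈ E'_β and v − w ∈ ℤ^n (i.e. every coordinate of v − w is an integer), then v = w. (Rigidity of E'_β, a consequence of Lemma 3.1 used in the proof of Equation (1.4).) -/
/-!
The difference `v - w` is an integer vector `m` with `∑ m μ • a μ = 0`, so `m = z • ℓs`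
by the description of the lattice of relations. If `z > 0`, then at an index `i < k` where
`v i = b ∈ {0, …, ℓ_i - 1}` we get `w i = b - z ℓ_i < 0`, a negative integer, which `w ∈ E'_β`
forbids; exchanging `v` and `w` excludes `z < 0`. Hence `z = 0` and `v = w`.
-/

theorem sum_smul_eq_zero_of_intCast {R ι δ : Type*} [Ring R] [CharZero R] [Fintype ι]
    {a : ι → δ → ℤ} {m : ι → ℤ}
    (h : ∑ μ, (m μ : R) • (fun i => (a μ i : R)) = 0) :
    ∑ μ, m μ • a μ = 0 := by
  funext i
  have hi := congrFun h i
  simp only [Finset.sum_apply, Pi.smul_apply, smul_eq_mul, Pi.zero_apply] at hi ⊢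
  exact_mod_cast hi

theorem nonpos_of_natCast_sub_eq_mul {R : Type*} [Ring R] [CharZero R] {x y : R} {z ℓ : ℤ}
    {b : ℕ} (hb : (b : ℤ) < ℓ) (hx : x = b) (hy : ∀ m : ℤ, m < 0 → y ≠ m)
    (hxy : x - y = ((z * ℓ : ℤ) : R)) : z ≤ 0 := by
  by_contra! hz
  refine hy (b - z * ℓ) (by nlinarith) ?_
  push_cast at hxy ⊢
  rw [← hx, ← hxy, sub_sub_cancel]

theorem stmt_7_general (d n k : ℕ)
    (a : Fin n → Fin d → ℤ)
    (ℓ : Fin n → ℤ)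
    (ℓs : Fin n → ℤ) (hℓs : ∀ μ : Fin n, ℓs μ = if (μ : ℕ) < k then ℓ μ else -ℓ μ)
    (hlat : ∀ l : Fin n → ℤ, (∑ μ, l μ • a μ) = 0 ↔ ∃ z : ℤ, l = z • ℓs)
    (aC : Fin n → Fin d → ℂ) (haC : ∀ μ i, aC μ i = (a μ i : ℂ))
    (E E' : (Fin d → ℂ) → Set (Fin n → ℂ))
    (hE : ∀ (γ : Fin d → ℂ) (v : Fin n → ℂ), v ∈ E γ ↔
      (∑ μ, v μ • aC μ) = γ ∧
        ∃ i : Fin n, (i : ℕ) < k ∧ ∃ b : ℕ, (b : ℤ) < ℓ i ∧ v i = (b : ℂ))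
    (hE' : ∀ (γ : Fin d → ℂ) (v : Fin n → ℂ), v ∈ E' γ ↔
      v ∈ E γ ∧ ∀ i : Fin n, (i : ℕ) < k → ∀ m : ℤ, m < 0 → v i ≠ (m : ℂ))
    (β : Fin d → ℂ)
    (v w : Fin n → ℂ) (hv : v ∈ E' β) (hw : w ∈ E' β)
    (hint : ∀ μ : Fin n, ∃ m : ℤ, v μ - w μ = (m : ℂ)) :
    v = w := by
  choose m hm using hint
  obtain rfl : aC = fun μ i => (a μ i : ℂ) := funext fun μ => funext (haC μ)
  obtain ⟨hvE, hv_nonneg⟩ := (hE' β v).mp hv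
  obtain ⟨hwE, hw_nonneg⟩ := (hE' β w).mp hw
  obtain ⟨hv_sum, iv, hiv, bv, hbv, hv_iv⟩ := (hE β v).mp hvE
  obtain ⟨hw_sum, iw, hiw, bw, hbw, hw_iw⟩ := (hE β w).mp hwE
  have hrel : ∑ μ, m μ • a μ = 0 := by
    refine sum_smul_eq_zero_of_intCast (R := ℂ) ?_
    simp_rw [← hm, sub_smul, Finset.sum_sub_distrib, hv_sum, hw_sum, sub_self]
  obtain ⟨z, hz⟩ := (hlat m).mp hrel
  have hm_mul : ∀ i : Fin n, (i : ℕ) < k → m i = z * ℓ i := fun i hi => by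
    rw [hz, Pi.smul_apply, smul_eq_mul, hℓs, if_pos hi]
  have hz_nonpos : z ≤ 0 :=
    nonpos_of_natCast_sub_eq_mul hbv hv_iv (hw_nonneg iv hiv) (by rw [hm, hm_mul iv hiv])
  have hz_nonneg : 0 ≤ z := neg_nonpos.mp <|
    nonpos_of_natCast_sub_eq_mul hbw hw_iw (hv_nonneg iw hiw)
      (by rw [← neg_sub, hm, hm_mul iw hiw]; push_cast; ring)
  funext μ
  rw [← sub_eq_zero, hm, hz, le_antisymm hz_nonpos hz_nonneg]
  simp

/-- Rigidity of E'_β: two elements of E'_β differing by an integer vector are equal. -/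
theorem stmt_7 (d n k : ℕ) (hd : 1 ≤ d) (hn : 2 ≤ n) (hk1 : 1 ≤ k) (hkn : k ≤ n)
    (a : Fin n → Fin d → ℤ)
    (aR : Fin n → Fin d → ℝ) (haR : ∀ μ i, aR μ i = (a μ i : ℝ))
    (hdim : Module.finrank ℝ (Submodule.span ℝ (Set.range aR)) = n - 1)
    (hindep : ∀ μ₀ : Fin n,
      LinearIndependent ℝ (fun ν : {ν : Fin n // ν ≠ μ₀} => aR ν.1))
    (ℓ : Fin n → ℤ) (hℓpos : ∀ μ, 0 < ℓ μ)
    (ℓs : Fin n → ℤ) (hℓs : ∀ μ : Fin n, ℓs μ = if (μ : ℕ) < k then ℓ μ else -ℓ μ)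
    (hlat : ∀ l : Fin n → ℤ, (∑ μ, l μ • a μ) = 0 ↔ ∃ z : ℤ, l = z • ℓs)
    (aC : Fin n → Fin d → ℂ) (haC : ∀ μ i, aC μ i = (a μ i : ℂ))
    (E E' : (Fin d → ℂ) → Set (Fin n → ℂ))
    (hE : ∀ (γ : Fin d → ℂ) (v : Fin n → ℂ), v ∈ E γ ↔
      (∑ μ, v μ • aC μ) = γ ∧
        ∃ i : Fin n, (i : ℕ) < k ∧ ∃ b : ℕ, (b : ℤ) < ℓ i ∧ v i = (b : ℂ))
    (hE' : ∀ (γ : Fin d → ℂ) (v : Fin n → ℂ), v ∈ E' γ ↔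
      v ∈ E γ ∧ ∀ i : Fin n, (i : ℕ) < k → ∀ m : ℤ, m < 0 → v i ≠ (m : ℂ))
    (β : Fin d → ℂ) (hβ : β ∈ Submodule.span ℂ (Set.range aC))
    (v w : Fin n → ℂ) (hv : v ∈ E' β) (hw : w ∈ E' β)
    (hint : ∀ μ : Fin n, ∃ m : ℤ, v μ - w μ = (m : ℂ)) :
    v = w :=
  stmt_7_general d n k a ℓ ℓs hℓs hlat aC haC E E' hE hE' β v w hv hw hint
end

section
/- Every v ∈ E'_β has minimal negative support: there is no integer z such that nsupp(v + z·ℓ) is a proper subset of nsupp(v). (Lemma 3.2.) -/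
/-!
The signs of `ℓ` decide everything. For `z ≥ 0` the shift `z • ℓ` lowers only coordinates
`μ > k`, and these are the only places where `v ∈ E'_β` may have negative integer entries, so
`nsupp` can only grow. For `z < 0` the coordinate `v_i ∈ {0, …, ℓ_i - 1}`, `i ≤ k`, becomes a
negative integer, so an index outside `nsupp v` enters.
-/

section NegIntSupport

variable {ι R : Type*} [Ring R]

def negIntSupport (w : ι → R) : Set ι := {μ | ∃ m : ℤ, m < 0 ∧ w μ = m}

lemma negIntSupport_subset_add_intCast {w : ι → R} {t : ι → ℤ}
    (ht : ∀ μ ∈ negIntSupport w, t μ ≤ 0) :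
    negIntSupport w ⊆ negIntSupport (fun μ => w μ + t μ) := by
  rintro μ hμ
  obtain ⟨m, hm, hwm⟩ := hμ
  exact ⟨m + t μ, by linarith [ht μ ⟨m, hm, hwm⟩], by simp [hwm]⟩

lemma mem_negIntSupport_add_intCast {w : ι → R} {t : ι → ℤ} {i : ι} {b : ℕ} (hb : w i = b)
    (hneg : b + t i < 0) : i ∈ negIntSupport (fun μ => w μ + t μ) :=
  ⟨b + t i, hneg, by simp [hb]⟩

lemma notMem_negIntSupport_of_eq_natCast [CharZero R] {w : ι → R} {i : ι} {b : ℕ}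
    (hb : w i = b) : i ∉ negIntSupport w := by
  rintro ⟨m, hm, hwm⟩
  have : (b : ℤ) = m := by exact_mod_cast hb ▸ hwm
  omega

end NegIntSupport

theorem stmt_8_general (d n k : ℕ)
    (ℓ : Fin n → ℤ) (hℓpos : ∀ μ, 0 < ℓ μ)
    (ℓs : Fin n → ℤ) (hℓs : ∀ μ : Fin n, ℓs μ = if (μ : ℕ) < k then ℓ μ else -ℓ μ)
    (aC : Fin n → Fin d → ℂ)
    (E E' : (Fin d → ℂ) → Set (Fin n → ℂ))
    (hE : ∀ (γ : Fin d → ℂ) (v : Fin n → ℂ), v ∈ E γ ↔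
      (∑ μ, v μ • aC μ) = γ ∧
        ∃ i : Fin n, (i : ℕ) < k ∧ ∃ b : ℕ, (b : ℤ) < ℓ i ∧ v i = (b : ℂ))
    (hE' : ∀ (γ : Fin d → ℂ) (v : Fin n → ℂ), v ∈ E' γ ↔
      v ∈ E γ ∧ ∀ i : Fin n, (i : ℕ) < k → ∀ m : ℤ, m < 0 → v i ≠ (m : ℂ))
    (β : Fin d → ℂ)
    (v : Fin n → ℂ) (hv : v ∈ E' β) :
    ∀ z : ℤ,
      ¬ ({μ : Fin n | ∃ m : ℤ, m < 0 ∧ v μ + ((z * ℓs μ : ℤ) : ℂ) = (m : ℂ)} ⊂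
          {μ : Fin n | ∃ m : ℤ, m < 0 ∧ v μ = (m : ℂ)}) := by
  intro z hss
  change negIntSupport (fun μ => v μ + ((z * ℓs μ : ℤ) : ℂ)) ⊂ negIntSupport v at hss
  obtain ⟨hvE, hvneg⟩ := (hE' β v).1 hv
  obtain ⟨-, i, hik, b, hbℓ, hvi⟩ := (hE β v).1 hvE
  rcases lt_or_ge z 0 with hz | hz
  · have hi : i ∈ negIntSupport (fun μ => v μ + ((z * ℓs μ : ℤ) : ℂ)) :=
      mem_negIntSupport_add_intCast (t := fun μ => z * ℓs μ) hvi
        (by rw [hℓs, if_pos hik]; nlinarith [hℓpos i])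
    exact notMem_negIntSupport_of_eq_natCast hvi (hss.1 hi)
  · refine hss.2 (negIntSupport_subset_add_intCast (t := fun μ => z * ℓs μ) fun μ hμ => ?_)
    obtain ⟨m, hm, hvm⟩ := hμ
    have hμk : ¬ (μ : ℕ) < k := fun h => hvneg μ h m hm hvm
    simp only [hℓs, if_neg hμk]
    nlinarith [hℓpos μ]

/-- Lemma 3.2: every v ∈ E'_β has minimal negative support. -/
theorem stmt_8 (d n k : ℕ) (hd : 1 ≤ d) (hn : 2 ≤ n) (hk1 : 1 ≤ k) (hkn : k ≤ n)
    (a : Fin n → Fin d → ℤ)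
    (aR : Fin n → Fin d → ℝ) (haR : ∀ μ i, aR μ i = (a μ i : ℝ))
    (hdim : Module.finrank ℝ (Submodule.span ℝ (Set.range aR)) = n - 1)
    (hindep : ∀ μ₀ : Fin n,
      LinearIndependent ℝ (fun ν : {ν : Fin n // ν ≠ μ₀} => aR ν.1))
    (ℓ : Fin n → ℤ) (hℓpos : ∀ μ, 0 < ℓ μ)
    (ℓs : Fin n → ℤ) (hℓs : ∀ μ : Fin n, ℓs μ = if (μ : ℕ) < k then ℓ μ else -ℓ μ)
    (hlat : ∀ l : Fin n → ℤ, (∑ μ, l μ • a μ) = 0 ↔ ∃ z : ℤ, l = z • ℓs)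
    (aC : Fin n → Fin d → ℂ) (haC : ∀ μ i, aC μ i = (a μ i : ℂ))
    (E E' : (Fin d → ℂ) → Set (Fin n → ℂ))
    (hE : ∀ (γ : Fin d → ℂ) (v : Fin n → ℂ), v ∈ E γ ↔
      (∑ μ, v μ • aC μ) = γ ∧
        ∃ i : Fin n, (i : ℕ) < k ∧ ∃ b : ℕ, (b : ℤ) < ℓ i ∧ v i = (b : ℂ))
    (hE' : ∀ (γ : Fin d → ℂ) (v : Fin n → ℂ), v ∈ E' γ ↔
      v ∈ E γ ∧ ∀ i : Fin n, (i : ℕ) < k → ∀ m : ℤ, m < 0 → v i ≠ (m : ℂ))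
    (β : Fin d → ℂ) (hβ : β ∈ Submodule.span ℂ (Set.range aC))
    (v : Fin n → ℂ) (hv : v ∈ E' β) :
    ∀ z : ℤ,
      ¬ ({μ : Fin n | ∃ m : ℤ, m < 0 ∧ v μ + ((z * ℓs μ : ℤ) : ℂ) = (m : ℂ)} ⊂
          {μ : Fin n | ∃ m : ℤ, m < 0 ∧ v μ = (m : ℂ)}) :=
  stmt_8_general d n k ℓ hℓpos ℓs hℓs aC E E' hE hE' β v hv
end

section
/- For every β ∈ V_ℂ the set E'_β is nonempty. (Asserted in Section 3 as a consequence of Lemma 3.1.) -/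
/-!
Write `β = ∑ c μ a_μ`. Moving `c` along the relation line `c + t ℓ` leaves the sum unchanged.
Choosing `t = -c_{i₀} / ℓ_{i₀}` for the index `i₀ < k` that maximizes `-Re c_i / ℓ_i` makes
the `i₀`-th coordinate vanish, while every coordinate `i < k` keeps a nonnegative real part,
so none of them is a negative integer.
-/

open Finset

lemma sum_add_mul_smul_of_sum_smul_eq_zero {ι R M : Type*} [Fintype ι] [CommRing R]
    [AddCommGroup M] [Module R M] {r : ι → R} {x : ι → M} (hr : ∑ i, r i • x i = 0)
    (c : ι → R) (t : R) :
    ∑ i, (c i + t * r i) • x i = ∑ i, c i • x i := by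
  simp only [add_smul, mul_smul, sum_add_distrib, ← smul_sum, hr, smul_zero, add_zero]

lemma sum_intCast_smul_eq_zero {ι κ : Type*} (R : Type*) [Fintype ι] [Ring R]
    {r : ι → ℤ} {x : ι → κ → ℤ} (h : ∑ i, r i • x i = 0) :
    ∑ i, (r i : R) • (fun j => (x i j : R)) = 0 := by
  ext j
  have hj := congrFun h j
  simp only [Finset.sum_apply, Pi.smul_apply, smul_eq_mul, Pi.zero_apply] at hj ⊢
  simpa using congrArg (Int.cast : ℤ → R) hj

lemma Complex.ne_intCast_of_re_nonneg {z : ℂ} (hz : 0 ≤ z.re) {m : ℤ} (hm : m < 0) :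
    z ≠ m := by
  rintro rfl
  have : (m : ℝ) < 0 := by exact_mod_cast hm
  simp only [Complex.intCast_re] at hz
  linarith

lemma exists_add_mul_eq_zero_and_re_nonneg {ι : Type*} {s : Finset ι} (hs : s.Nonempty)
    (c : ι → ℂ) {w : ι → ℝ} (hw : ∀ i ∈ s, 0 < w i) :
    ∃ i₀ ∈ s, ∃ t : ℂ, c i₀ + t * w i₀ = 0 ∧ ∀ i ∈ s, 0 ≤ (c i + t * w i).re := by
  obtain ⟨i₀, hi₀, hmax⟩ := s.exists_max_image (fun i => -(c i).re / w i) hs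
  refine ⟨i₀, hi₀, -c i₀ / w i₀, ?_, fun i hi => ?_⟩
  · have : (w i₀ : ℂ) ≠ 0 := Complex.ofReal_ne_zero.mpr (hw i₀ hi₀).ne'
    field_simp
    ring
  · have hre : (c i + -c i₀ / w i₀ * w i).re = (c i).re + -(c i₀).re / w i₀ * w i := by
      simp [Complex.div_ofReal_re]
    rw [hre, ← neg_le_iff_add_nonneg']
    exact (div_le_iff₀ (hw i hi)).mp (hmax i hi) |>.trans_eq (by ring)

theorem stmt_9_general (d n k : ℕ) (hk1 : 1 ≤ k) (hkn : k ≤ n)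
    (a : Fin n → Fin d → ℤ)
    (ℓ : Fin n → ℤ) (hℓpos : ∀ μ, 0 < ℓ μ)
    (ℓs : Fin n → ℤ) (hℓs : ∀ μ : Fin n, ℓs μ = if (μ : ℕ) < k then ℓ μ else -ℓ μ)
    (hlat : ∀ l : Fin n → ℤ, (∑ μ, l μ • a μ) = 0 ↔ ∃ z : ℤ, l = z • ℓs)
    (aC : Fin n → Fin d → ℂ) (haC : ∀ μ i, aC μ i = (a μ i : ℂ))
    (E E' : (Fin d → ℂ) → Set (Fin n → ℂ))
    (hE : ∀ (γ : Fin d → ℂ) (v : Fin n → ℂ), v ∈ E γ ↔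
      (∑ μ, v μ • aC μ) = γ ∧
        ∃ i : Fin n, (i : ℕ) < k ∧ ∃ b : ℕ, (b : ℤ) < ℓ i ∧ v i = (b : ℂ))
    (hE' : ∀ (γ : Fin d → ℂ) (v : Fin n → ℂ), v ∈ E' γ ↔
      v ∈ E γ ∧ ∀ i : Fin n, (i : ℕ) < k → ∀ m : ℤ, m < 0 → v i ≠ (m : ℂ))
    (β : Fin d → ℂ) (hβ : β ∈ Submodule.span ℂ (Set.range aC))
    : (E' β).Nonempty := by
  obtain ⟨c, hc⟩ := (Submodule.mem_span_range_iff_exists_fun ℂ).mp hβ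
  have hrel : ∑ μ, (ℓs μ : ℂ) • aC μ = 0 := by
    rw [show aC = fun μ i => (a μ i : ℂ) from funext₂ haC]
    exact sum_intCast_smul_eq_zero ℂ ((hlat ℓs).mpr ⟨1, (one_smul ℤ ℓs).symm⟩)
  have hℓs_pos : ∀ i ∈ univ.filter (fun i : Fin n => (i : ℕ) < k), 0 < (ℓs i : ℝ) := by
    intro i hi
    rw [hℓs i, if_pos (mem_filter.mp hi).2]
    exact_mod_cast hℓpos i
  obtain ⟨i₀, hi₀, t, hzero, hre⟩ := exists_add_mul_eq_zero_and_re_nonneg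
    ⟨⟨0, hk1.trans hkn⟩, mem_filter.mpr ⟨mem_univ _, hk1⟩⟩ c hℓs_pos
  simp only [Complex.ofReal_intCast, mem_filter, mem_univ, true_and] at hzero hre hi₀
  refine ⟨fun μ => c μ + t * ℓs μ, (hE' β _).mpr ⟨(hE β _).mpr ⟨?_, i₀, hi₀, 0, ?_, ?_⟩, ?_⟩⟩
  · rw [sum_add_mul_smul_of_sum_smul_eq_zero hrel, hc]
  · exact_mod_cast hℓpos i₀
  · simpa using hzero
  · exact fun i hi m hm => Complex.ne_intCast_of_re_nonneg (hre i hi) hm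

/-- Section 3: E'_β is nonempty for every β ∈ V_ℂ. -/
theorem stmt_9 (d n k : ℕ) (hd : 1 ≤ d) (hn : 2 ≤ n) (hk1 : 1 ≤ k) (hkn : k ≤ n)
    (a : Fin n → Fin d → ℤ)
    (aR : Fin n → Fin d → ℝ) (haR : ∀ μ i, aR μ i = (a μ i : ℝ))
    (hdim : Module.finrank ℝ (Submodule.span ℝ (Set.range aR)) = n - 1)
    (hindep : ∀ μ₀ : Fin n,
      LinearIndependent ℝ (fun ν : {ν : Fin n // ν ≠ μ₀} => aR ν.1))
    (ℓ : Fin n → ℤ) (hℓpos : ∀ μ, 0 < ℓ μ)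
    (ℓs : Fin n → ℤ) (hℓs : ∀ μ : Fin n, ℓs μ = if (μ : ℕ) < k then ℓ μ else -ℓ μ)
    (hlat : ∀ l : Fin n → ℤ, (∑ μ, l μ • a μ) = 0 ↔ ∃ z : ℤ, l = z • ℓs)
    (aC : Fin n → Fin d → ℂ) (haC : ∀ μ i, aC μ i = (a μ i : ℂ))
    (E E' : (Fin d → ℂ) → Set (Fin n → ℂ))
    (hE : ∀ (γ : Fin d → ℂ) (v : Fin n → ℂ), v ∈ E γ ↔
      (∑ μ, v μ • aC μ) = γ ∧
        ∃ i : Fin n, (i : ℕ) < k ∧ ∃ b : ℕ, (b : ℤ) < ℓ i ∧ v i = (b : ℂ))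
    (hE' : ∀ (γ : Fin d → ℂ) (v : Fin n → ℂ), v ∈ E' γ ↔
      v ∈ E γ ∧ ∀ i : Fin n, (i : ℕ) < k → ∀ m : ℤ, m < 0 → v i ≠ (m : ℂ))
    (β : Fin d → ℂ) (hβ : β ∈ Submodule.span ℂ (Set.range aC))
    : (E' β).Nonempty :=
  stmt_9_general d n k hk1 hkn a ℓ hℓpos ℓs hℓs hlat aC haC E E' hE hE' β hβ
end

section
/- Let v ∈ ℂ and r ∈ ℕ, and for l ∈ ℤ define g_l : (0,∞) → ℂ by g_l(t) = t^{v+l} · ∑_{s=0}^{r} M_{l,s}(v) · r(r−1)⋯(r−s+1) · (log t)^{r−s}, where t^{v+l} = exp((v+l)·log t) for real t > 0 and r(r−1)⋯(r−s+1) is the falling factorial. Then g_0(t) = t^v (log t)^r for all t > 0, and for every l ∈ ℤ such that either v is not a negative integer or v + l < 0, the function g_l is differentiable at every t > 0 with derivative g_l'(t) = g_{l−1}(t). (The content of Lemma 4.4: the explicit formula (4.5) gives the family of functions obtained from t^v log^r t by iterated differentiation and integration.) -/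
/-!
Write `g_l(t) = t^(v+l) P_l(log t)` with `P_l = ∑_s M_{l,s}(v) r(r-1)⋯(r-s+1) X^(r-s)`. Then
`g_l' = g_{l-1}` is the polynomial identity `P_{l-1} = (v+l) P_l + P_l'`, i.e. the recurrence
`M_{l-1,s+1} = (v+l) M_{l,s+1} + M_{l,s}` on the coefficients. For `l ≤ 0`, `M_{l,s}(c)` is the
coefficient of `X^s` in `∏_{t<-l} (X + c - t)`, and the recurrence is multiplication by the new
factor `X + c + l`. For `l > 0`, `M_{l,s}(c) = (-1)^s h_s(x_1, …, x_l) / ((c+1)⋯(c+l))` with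
`x_j = 1/(c+j)` and `h_s` the complete homogeneous symmetric polynomial, and the recurrence is
`h_{s+1}(x_1, …, x_l) = h_{s+1}(x_1, …, x_{l-1}) + x_l h_s(x_1, …, x_l)`.
-/

/-- The coefficients M_{l,s}(c) of Section 4. -/
noncomputable def Mls (c : ℂ) (l : ℤ) (s : ℕ) : ℂ :=
  if l = 0 then (if s = 0 then 1 else 0)
  else if 0 < l then
    ((-1 : ℂ) ^ s / ∏ t ∈ Finset.range l.toNat, (c + t + 1)) *
      ∑ f ∈ Finset.Nat.antidiagonalTuple l.toNat s,
        ∏ t : Fin l.toNat, (c + (t : ℕ) + 1) ^ (-(f t : ℤ))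
  else
    if s ≤ (-l).toNat then
      ∑ S ∈ Finset.powersetCard ((-l).toNat - s) (Finset.range (-l).toNat),
        ∏ t ∈ S, (c - t)
    else 0

open Finset Polynomial

theorem Finset.Nat.sum_antidiagonalTuple_succ {M : Type*} [AddCommMonoid M] (k n : ℕ)
    (F : (Fin (k + 1) → ℕ) → M) :
    ∑ f ∈ Nat.antidiagonalTuple (k + 1) n, F f =
      ∑ p ∈ antidiagonal n, ∑ g ∈ Nat.antidiagonalTuple k p.1, F (Fin.snoc g p.2) := by
  rw [Finset.sum_sigma']
  symm
  refine Finset.sum_nbij' (fun q => Fin.snoc q.2 q.1.2)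
    (fun f => ⟨(n - f (Fin.last k), f (Fin.last k)), Fin.init f⟩) ?_ ?_ ?_ ?_ ?_
  · rintro ⟨⟨a, b⟩, g⟩ h
    simp_all [Nat.mem_antidiagonalTuple, Fin.sum_univ_castSucc]
  · intro f hf
    simp only [Nat.mem_antidiagonalTuple, Fin.sum_univ_castSucc] at hf
    simp only [mem_sigma, HasAntidiagonal.mem_antidiagonal, Nat.mem_antidiagonalTuple, Fin.init]
    omega
  · rintro ⟨⟨a, b⟩, g⟩ h
    simp only [mem_sigma, HasAntidiagonal.mem_antidiagonal] at h
    simp [← h.1]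
  · exact fun f _ => Fin.snoc_init_self f
  · intros
    rfl

section CompleteHomogeneous

variable {R : Type*} [CommSemiring R]

/-- `completeHomogeneous x n s` is the complete homogeneous symmetric polynomial `h_s`
evaluated at `x 0, …, x (n - 1)`. -/
def completeHomogeneous (x : ℕ → R) (n s : ℕ) : R :=
  ∑ f ∈ Nat.antidiagonalTuple n s, ∏ i : Fin n, x i ^ f i

theorem completeHomogeneous_zero_left (x : ℕ → R) (s : ℕ) :
    completeHomogeneous x 0 s = if s = 0 then 1 else 0 := by
  cases s <;> simp [completeHomogeneous]

theorem completeHomogeneous_zero_right (x : ℕ → R) (n : ℕ) :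
    completeHomogeneous x n 0 = 1 := by
  simp [completeHomogeneous, Nat.antidiagonalTuple_zero_right]

theorem completeHomogeneous_succ_left (x : ℕ → R) (n s : ℕ) :
    completeHomogeneous x (n + 1) s =
      ∑ p ∈ antidiagonal s, completeHomogeneous x n p.1 * x n ^ p.2 := by
  simp only [completeHomogeneous, Nat.sum_antidiagonalTuple_succ, sum_mul,
    Fin.prod_univ_castSucc, Fin.snoc_castSucc, Fin.snoc_last, Fin.val_castSucc, Fin.val_last]

theorem completeHomogeneous_succ_succ (x : ℕ → R) (n s : ℕ) :
    completeHomogeneous x (n + 1) (s + 1) =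
      completeHomogeneous x n (s + 1) + x n * completeHomogeneous x (n + 1) s := by
  rw [completeHomogeneous_succ_left, completeHomogeneous_succ_left, Nat.sum_antidiagonal_succ',
    mul_sum]
  simp only [pow_zero, mul_one, pow_succ]
  congr 1
  exact sum_congr rfl fun _ _ => by ring

end CompleteHomogeneous

theorem Mls_natCast (c : ℂ) (n s : ℕ) :
    Mls c n s = (-1) ^ s / (∏ t ∈ range n, (c + t + 1)) *
      completeHomogeneous (fun t => (c + t + 1)⁻¹) n s := by
  rcases n with _ | n
  · cases s <;> simp [Mls, completeHomogeneous_zero_left]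
  · rw [Mls, if_neg (by omega), if_pos (by omega), Int.toNat_natCast, completeHomogeneous]
    simp only [inv_pow, zpow_neg, zpow_natCast]

theorem Mls_neg_natCast (c : ℂ) (n s : ℕ) :
    Mls c (-n) s = (∏ t ∈ range n, (X + C (c - t))).coeff s := by
  rcases n with _ | n
  · simp [Mls, coeff_one]
  rw [Mls, if_neg (by omega), if_neg (by omega), neg_neg, Int.toNat_natCast]
  split_ifs with hs
  · rw [prod_X_add_C_coeff _ _ (by simpa using hs), card_range]
  · rw [coeff_eq_zero_of_natDegree_lt]
    calc (∏ t ∈ range (n + 1), (X + C (c - t))).natDegree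
        ≤ ∑ t ∈ range (n + 1), (X + C (c - t)).natDegree := natDegree_prod_le _ _
      _ < s := by
        simp only [natDegree_X_add_C, sum_const, card_range, smul_eq_mul, mul_one]
        omega

theorem Mls_sub_one_zero (c : ℂ) (l : ℤ) (hl : 0 < l → c + l ≠ 0) :
    Mls c (l - 1) 0 = (c + l) * Mls c l 0 := by
  rcases le_or_gt l 0 with hl0 | hl0
  · obtain ⟨n, rfl⟩ : ∃ n : ℕ, l = -n := ⟨(-l).toNat, by omega⟩
    rw [show -(n : ℤ) - 1 = -((n + 1 : ℕ) : ℤ) by push_cast; ring, Mls_neg_natCast,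
      Mls_neg_natCast, prod_range_succ, mul_coeff_zero, coeff_add, coeff_X_zero, coeff_C_zero,
      zero_add]
    push_cast
    ring
  · obtain ⟨n, rfl⟩ : ∃ n : ℕ, l = n + 1 := ⟨(l - 1).toNat, by omega⟩
    rw [show (n : ℤ) + 1 - 1 = n by ring, show (n : ℤ) + 1 = ((n + 1 : ℕ) : ℤ) by push_cast; ring,
      Mls_natCast, Mls_natCast, prod_range_succ, completeHomogeneous_zero_right,
      completeHomogeneous_zero_right]
    have ha : c + n + 1 ≠ 0 := by simpa [add_assoc] using hl hl0
    push_cast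
    -- if some `c + t + 1` with `t < n` vanishes, both sides are `0` since `x / 0 = 0`
    rcases eq_or_ne (∏ t ∈ range n, (c + t + 1)) 0 with hA | hA
    · simp [hA]
    · field_simp
      ring

theorem Mls_sub_one_succ (c : ℂ) (l : ℤ) (hl : 0 < l → c + l ≠ 0) (s : ℕ) :
    Mls c (l - 1) (s + 1) = (c + l) * Mls c l (s + 1) + Mls c l s := by
  rcases le_or_gt l 0 with hl0 | hl0
  · obtain ⟨n, rfl⟩ : ∃ n : ℕ, l = -n := ⟨(-l).toNat, by omega⟩
    rw [show -(n : ℤ) - 1 = -((n + 1 : ℕ) : ℤ) by push_cast; ring, Mls_neg_natCast,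
      Mls_neg_natCast, Mls_neg_natCast, prod_range_succ, mul_add, coeff_add, coeff_mul_X,
      coeff_mul_C]
    push_cast
    ring
  · obtain ⟨n, rfl⟩ : ∃ n : ℕ, l = n + 1 := ⟨(l - 1).toNat, by omega⟩
    rw [show (n : ℤ) + 1 - 1 = n by ring, show (n : ℤ) + 1 = ((n + 1 : ℕ) : ℤ) by push_cast; ring,
      Mls_natCast, Mls_natCast, Mls_natCast, prod_range_succ, completeHomogeneous_succ_succ]
    have ha : c + n + 1 ≠ 0 := by simpa [add_assoc] using hl hl0
    push_cast
    rcases eq_or_ne (∏ t ∈ range n, (c + t + 1)) 0 with hA | hA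
    · simp [hA]
    · field_simp
      ring

/-- `g_l(t) = t^(c+l) (logPoly c r l).eval (log t)`. -/
noncomputable def logPoly (c : ℂ) (r : ℕ) (l : ℤ) : ℂ[X] :=
  ∑ s ∈ range (r + 1), C (Mls c l s * r.descFactorial s) * X ^ (r - s)

theorem derivative_logPoly (c : ℂ) (r : ℕ) (l : ℤ) :
    derivative (logPoly c r l) =
      ∑ s ∈ range r, C (Mls c l s * r.descFactorial (s + 1)) * X ^ (r - (s + 1)) := by
  rw [logPoly, derivative_sum, sum_range_succ]
  simp only [derivative_C_mul_X_pow, Nat.sub_self, Nat.cast_zero, mul_zero, C_0, zero_mul,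
    add_zero]
  refine sum_congr rfl fun s _ => ?_
  rw [Nat.descFactorial_succ, Nat.sub_sub, Nat.cast_mul, mul_assoc,
    mul_comm (r.descFactorial s : ℂ)]

theorem logPoly_sub_one (c : ℂ) (r : ℕ) (l : ℤ) (hl : 0 < l → c + l ≠ 0) :
    logPoly c r (l - 1) = C (c + l) * logPoly c r l + derivative (logPoly c r l) := by
  rw [derivative_logPoly, logPoly, logPoly, sum_range_succ', sum_range_succ', mul_add, mul_sum,
    add_right_comm, ← sum_add_distrib]
  simp only [Mls_sub_one_succ c l hl, Mls_sub_one_zero c l hl]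
  congr 1
  · refine sum_congr rfl fun s _ => ?_
    simp only [map_add, map_mul]
    ring
  · simp only [map_mul]
    ring

theorem hasDerivAt_cexp_mul_log_mul_eval_log (a : ℂ) (P : ℂ[X]) {t : ℝ} (ht : 0 < t) :
    HasDerivAt (fun u : ℝ => Complex.exp (a * Real.log u) * P.eval (Real.log u : ℂ))
      (Complex.exp ((a - 1) * Real.log t) * (C a * P + derivative P).eval (Real.log t : ℂ)) t := by
  have hlog : HasDerivAt (fun u : ℝ => (Real.log u : ℂ)) (t⁻¹ : ℂ) t := by
    simpa using (Real.hasDerivAt_log ht.ne').ofReal_comp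
  have hexp : Complex.exp (a * Real.log t) = Complex.exp ((a - 1) * Real.log t) * t := by
    rw [show a * (Real.log t : ℂ) = (a - 1) * Real.log t + Real.log t by ring, Complex.exp_add,
      ← Complex.ofReal_exp, Real.exp_log ht]
  refine (((hlog.const_mul a).cexp).mul ((P.hasDerivAt _).comp t hlog)).congr_deriv ?_
  have ht' : (t : ℂ) ≠ 0 := by exact_mod_cast ht.ne'
  rw [hexp, eval_add, eval_mul, eval_C, Function.comp_apply]
  field_simp

/-- Lemma 4.4: the explicit family g_l given by formula (4.5) satisfies
g_0(t) = t^v (log t)^r and g_l' = g_{l-1} whenever v is not a negative integer,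
or v + l < 0. -/
theorem stmt_11 (v : ℂ) (r : ℕ)
    (g : ℤ → ℝ → ℂ)
    (hg : ∀ (l : ℤ) (t : ℝ), g l t =
      Complex.exp ((v + (l : ℂ)) * (Real.log t : ℂ)) *
        ∑ s ∈ Finset.range (r + 1),
          Mls v l s * (r.descFactorial s : ℂ) * ((Real.log t : ℂ)) ^ (r - s)) :
    (∀ t : ℝ, 0 < t →
        g 0 t = Complex.exp (v * (Real.log t : ℂ)) * ((Real.log t : ℂ)) ^ r) ∧
    (∀ l : ℤ,
        ((∀ m : ℤ, m < 0 → v ≠ (m : ℂ)) ∨ (∃ m : ℤ, v = (m : ℂ) ∧ m + l < 0)) →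
        ∀ t : ℝ, 0 < t → HasDerivAt (g l) (g (l - 1) t) t) := by
  have hg_logPoly (l : ℤ) : g l = fun u =>
      Complex.exp ((v + l) * Real.log u) * (logPoly v r l).eval (Real.log u : ℂ) := by
    funext u
    simp [hg, logPoly, eval_finsetSum]
  refine ⟨fun t _ => ?_, fun l hv t ht => ?_⟩
  · simp [hg, Mls]
  · have hl : 0 < l → v + l ≠ 0 := by
      intro hl0 hvl
      rcases hv with hv | ⟨m, rfl, hml⟩
      · exact hv (-l) (by omega) (by push_cast; linear_combination hvl)
      · have : m + l = 0 := by exact_mod_cast hvl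
        omega
    rw [hg_logPoly l, hg_logPoly (l - 1), logPoly_sub_one v r l hl]
    convert hasDerivAt_cexp_mul_log_mul_eval_log (v + l) (logPoly v r l) ht using 3
    push_cast
    ring
end

section
/- Suppose β is nonresonant and v ∈ E'_β. Then v_j is not an integer for any j ∈ {k+1,…,n}; consequently no coordinate of v is a negative integer. (Proposition 7.1.) -/
/-!
If `v ∈ E'_β` had an integer coordinate `v_j` with `j > k`, then together with the coordinate
`v_i ∈ {0, …, ℓ_i - 1}`, `i ≤ k`, supplied by `E_β`, subtracting the lattice vector
`v_i a_i + v_j a_j` from `β = ∑ v_μ a_μ` would put an element of `β + ℤA` into the span of the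
remaining `a_μ`, against nonresonance. Negative integer coordinates with index `≤ k` are excluded
by the definition of `E'_β`.
-/

open Finset Submodule

theorem exists_int_add_sum_smul_mem_span_compl {R M ι : Type*} [Ring R] [AddCommGroup M]
    [Module R M] [Fintype ι] (w : ι → M) (v : ι → R) (T : Set ι)
    (hT : ∀ μ ∈ T, ∃ z : ℤ, v μ = z) :
    ∃ c : ι → ℤ, ∑ μ, v μ • w μ + ∑ μ, (c μ : R) • w μ ∈ span R (w '' Tᶜ) := by
  choose! m hm using hT
  refine ⟨-m, ?_⟩
  rw [← sum_add_distrib]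
  refine sum_mem fun μ _ => ?_
  rw [← add_smul]
  by_cases hμ : μ ∈ T
  · simp [hm μ hμ]
  · exact smul_mem _ _ (subset_span ⟨μ, hμ, rfl⟩)

theorem stmt_14_general (d n k : ℕ)
    (ℓ : Fin n → ℤ)
    (aC : Fin n → Fin d → ℂ)
    (E E' : (Fin d → ℂ) → Set (Fin n → ℂ))
    (hE : ∀ (γ : Fin d → ℂ) (v : Fin n → ℂ), v ∈ E γ ↔
      (∑ μ, v μ • aC μ) = γ ∧
        ∃ i : Fin n, (i : ℕ) < k ∧ ∃ b : ℕ, (b : ℤ) < ℓ i ∧ v i = (b : ℂ))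
    (hE' : ∀ (γ : Fin d → ℂ) (v : Fin n → ℂ), v ∈ E' γ ↔
      v ∈ E γ ∧ ∀ i : Fin n, (i : ℕ) < k → ∀ m : ℤ, m < 0 → v i ≠ (m : ℂ))
    (β : Fin d → ℂ)
    (hnr : ∀ i j : Fin n, (i : ℕ) < k → k ≤ (j : ℕ) → ∀ c : Fin n → ℤ,
      β + ∑ μ, (c μ : ℂ) • aC μ ∉
        Submodule.span ℂ (aC '' {μ : Fin n | μ ≠ i ∧ μ ≠ j}))
    (v : Fin n → ℂ) (hv : v ∈ E' β) :
    (∀ j : Fin n, k ≤ (j : ℕ) → ¬ ∃ m : ℤ, v j = (m : ℂ)) ∧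
    (∀ μ : Fin n, ¬ ∃ m : ℤ, m < 0 ∧ v μ = (m : ℂ)) := by
  obtain ⟨⟨hsum, i, hik, b, -, hvi⟩, hneg⟩ := (hE' β v).1 hv |>.imp_left (hE β v).1
  have hupper : ∀ j : Fin n, k ≤ (j : ℕ) → ¬ ∃ m : ℤ, v j = (m : ℂ) := by
    rintro j hkj ⟨m, hm⟩
    obtain ⟨c, hc⟩ := exists_int_add_sum_smul_mem_span_compl aC v {i, j} <| by
      rintro μ (rfl | rfl)
      exacts [⟨b, mod_cast hvi⟩, ⟨m, hm⟩]
    have hpair : {μ | μ ≠ i ∧ μ ≠ j} = ({i, j} : Set (Fin n))ᶜ := by ext; simp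
    exact hnr i j hik hkj c (hpair ▸ hsum ▸ hc)
  refine ⟨hupper, fun μ ⟨m, hm0, hvm⟩ => ?_⟩
  by_cases hμk : (μ : ℕ) < k
  · exact hneg μ hμk m hm0 hvm
  · exact hupper μ (not_lt.1 hμk) ⟨m, hvm⟩

/-- Proposition 7.1: β nonresonant, v ∈ E'_β ⟹ v_j ∉ ℤ for j > k, and no coordinate of v is a negative integer. -/
theorem stmt_14 (d n k : ℕ) (hd : 1 ≤ d) (hn : 2 ≤ n) (hk1 : 1 ≤ k) (hkn : k ≤ n)
    (a : Fin n → Fin d → ℤ)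
    (aR : Fin n → Fin d → ℝ) (haR : ∀ μ i, aR μ i = (a μ i : ℝ))
    (hdim : Module.finrank ℝ (Submodule.span ℝ (Set.range aR)) = n - 1)
    (hindep : ∀ μ₀ : Fin n,
      LinearIndependent ℝ (fun ν : {ν : Fin n // ν ≠ μ₀} => aR ν.1))
    (ℓ : Fin n → ℤ) (hℓpos : ∀ μ, 0 < ℓ μ)
    (ℓs : Fin n → ℤ) (hℓs : ∀ μ : Fin n, ℓs μ = if (μ : ℕ) < k then ℓ μ else -ℓ μ)
    (hlat : ∀ l : Fin n → ℤ, (∑ μ, l μ • a μ) = 0 ↔ ∃ z : ℤ, l = z • ℓs)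
    (aC : Fin n → Fin d → ℂ) (haC : ∀ μ i, aC μ i = (a μ i : ℂ))
    (E E' : (Fin d → ℂ) → Set (Fin n → ℂ))
    (hE : ∀ (γ : Fin d → ℂ) (v : Fin n → ℂ), v ∈ E γ ↔
      (∑ μ, v μ • aC μ) = γ ∧
        ∃ i : Fin n, (i : ℕ) < k ∧ ∃ b : ℕ, (b : ℤ) < ℓ i ∧ v i = (b : ℂ))
    (hE' : ∀ (γ : Fin d → ℂ) (v : Fin n → ℂ), v ∈ E' γ ↔
      v ∈ E γ ∧ ∀ i : Fin n, (i : ℕ) < k → ∀ m : ℤ, m < 0 → v i ≠ (m : ℂ))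
    (β : Fin d → ℂ) (hβ : β ∈ Submodule.span ℂ (Set.range aC))
    (hnr : ∀ i j : Fin n, (i : ℕ) < k → k ≤ (j : ℕ) → ∀ c : Fin n → ℤ,
      β + ∑ μ, (c μ : ℂ) • aC μ ∉
        Submodule.span ℂ (aC '' {μ : Fin n | μ ≠ i ∧ μ ≠ j}))
    (v : Fin n → ℂ) (hv : v ∈ E' β) :
    (∀ j : Fin n, k ≤ (j : ℕ) → ¬ ∃ m : ℤ, v j = (m : ℂ)) ∧
    (∀ μ : Fin n, ¬ ∃ m : ℤ, m < 0 ∧ v μ = (m : ℂ)) :=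
  stmt_14_general d n k ℓ aC E E' hE hE' β hnr v hv
end

section
/- Suppose β is nonresonant, let v ∈ E'_β, let w ∈ ℤ^n, and let z ∈ ℤ be such that v_i + w_i + z·ℓ_i ≥ 0 for every i ∈ {1,…,k} for which v_i is an integer. Then ∏_{i=1}^k M_{w_i + zℓ_i, 0}(v_i) · ∏_{j=k+1}^n M_{w_j − zℓ_j, 0}(v_j) ≠ 0. (The nonvanishing of all coefficients of the logarithm-free series Φ^∅_{v,β+u}(x) in Equation (7.3), the key computation in the proof of Theorem 7.2 that nonresonant parameters satisfy the hypothesis of Corollary 6.6.) -/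
/-!
A factor `M_{e,0}(c)` vanishes only if `c` is an integer `m` with `m < 0` or `m + e < 0`. For
`i ≤ k` both are excluded, by `v ∈ E'_β` and by the hypothesis on `z`. For `j > k`, `v_j` is not an
integer at all: `v ∈ E_β` makes some `v_{i₀}` with `i₀ ≤ k` an integer, and if `v_j` were one too,
then `β - v_{i₀} a_{i₀} - v_j a_j`, an element of `β + ℤA`, would lie in the span of the remaining
`a_μ`, contradicting nonresonance.
-/

/-- The coefficients M_{e,0}(c) of Section 4. -/
noncomputable def Mzero (c : ℂ) (e : ℤ) : ℂ :=
  if 0 ≤ e then (∏ t ∈ Finset.range e.toNat, (c + t + 1))⁻¹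
  else ∏ t ∈ Finset.range (-e).toNat, (c - t)

lemma Mzero_ne_zero (c : ℂ) (e : ℤ)
    (h : ∀ m : ℤ, c = m → 0 ≤ m ∧ 0 ≤ m + e) : Mzero c e ≠ 0 := by
  unfold Mzero
  split_ifs
  · refine inv_ne_zero (Finset.prod_ne_zero_iff.2 fun t _ ht => ?_)
    have hc : c = ((-(t + 1) : ℤ) : ℂ) := by push_cast; linear_combination ht
    have := (h _ hc).1
    omega
  · refine Finset.prod_ne_zero_iff.2 fun t ht ht0 => ?_
    have hc : c = ((t : ℤ) : ℂ) := by push_cast; linear_combination ht0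
    have := (h _ hc).2
    have : t < (-e).toNat := Finset.mem_range.1 ht
    omega

open Submodule in
lemma exists_int_shift_mem_span_of_coeff_eq_int {ι R M : Type*} [Fintype ι] [DecidableEq ι]
    [Ring R] [AddCommGroup M] [Module R M] (x : ι → M) (v : ι → R) {i j : ι} (hij : i ≠ j)
    {mi mj : ℤ} (hi : v i = mi) (hj : v j = mj) :
    ∃ c : ι → ℤ, ∑ μ, v μ • x μ + ∑ μ, (c μ : R) • x μ ∈ span R (x '' {μ | μ ≠ i ∧ μ ≠ j}) := by
  refine ⟨fun μ => if μ = i then -mi else if μ = j then -mj else 0, ?_⟩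
  rw [← Finset.sum_add_distrib]
  refine sum_mem fun μ _ => ?_
  rw [← add_smul]
  by_cases hμi : μ = i
  · subst hμi; simp [hi]
  by_cases hμj : μ = j
  · subst hμj; simp [hij.symm, hj]
  · exact smul_mem _ _ (subset_span ⟨μ, ⟨hμi, hμj⟩, rfl⟩)

theorem stmt_15_general (d n k : ℕ)
    (ℓ : Fin n → ℤ)
    (aC : Fin n → Fin d → ℂ)
    (E E' : (Fin d → ℂ) → Set (Fin n → ℂ))
    (hE : ∀ (γ : Fin d → ℂ) (v : Fin n → ℂ), v ∈ E γ ↔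
      (∑ μ, v μ • aC μ) = γ ∧
        ∃ i : Fin n, (i : ℕ) < k ∧ ∃ b : ℕ, (b : ℤ) < ℓ i ∧ v i = (b : ℂ))
    (hE' : ∀ (γ : Fin d → ℂ) (v : Fin n → ℂ), v ∈ E' γ ↔
      v ∈ E γ ∧ ∀ i : Fin n, (i : ℕ) < k → ∀ m : ℤ, m < 0 → v i ≠ (m : ℂ))
    (β : Fin d → ℂ)
    (hnr : ∀ i j : Fin n, (i : ℕ) < k → k ≤ (j : ℕ) → ∀ c : Fin n → ℤ,
      β + ∑ μ, (c μ : ℂ) • aC μ ∉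
        Submodule.span ℂ (aC '' {μ : Fin n | μ ≠ i ∧ μ ≠ j}))
    (v : Fin n → ℂ) (hv : v ∈ E' β) (w : Fin n → ℤ) (z : ℤ)
    (hz : ∀ i : Fin n, (i : ℕ) < k → ∀ m : ℤ, v i = (m : ℂ) → 0 ≤ m + w i + z * ℓ i) :
    (∏ i ∈ Finset.univ.filter (fun i : Fin n => (i : ℕ) < k),
        Mzero (v i) (w i + z * ℓ i)) *
      (∏ j ∈ Finset.univ.filter (fun j : Fin n => ¬ (j : ℕ) < k),
        Mzero (v j) (w j - z * ℓ j)) ≠ 0 := by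
  obtain ⟨hvE, hv_not_neg⟩ := (hE' β v).mp hv
  obtain ⟨hsum, i₀, hi₀, b, -, hvi₀⟩ := (hE β v).mp hvE
  have hv_not_int : ∀ j : Fin n, k ≤ (j : ℕ) → ∀ m : ℤ, v j ≠ m := by
    intro j hj m hvj
    obtain ⟨c, hc⟩ := exists_int_shift_mem_span_of_coeff_eq_int aC v
      (i := i₀) (mi := b)
      (by rintro rfl; omega) (by exact_mod_cast hvi₀) hvj
    exact hnr i₀ j hi₀ hj c (hsum ▸ hc)
  refine mul_ne_zero (Finset.prod_ne_zero_iff.2 fun i hi => ?_)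
    (Finset.prod_ne_zero_iff.2 fun j hj => ?_)
  · have hik := (Finset.mem_filter.1 hi).2
    refine Mzero_ne_zero _ _ fun m hm => ⟨?_, ?_⟩
    · by_contra hneg
      exact hv_not_neg i hik m (by omega) hm
    · linarith [hz i hik m hm]
  · exact Mzero_ne_zero _ _ fun m hm =>
      absurd hm (hv_not_int j (by simpa using (Finset.mem_filter.1 hj).2) m)

/-- Key computation in Theorem 7.2: nonvanishing of the coefficients of the
logarithm-free series Φ^∅_{v,β+u}(x) in Equation (7.3), for nonresonant β. -/
theorem stmt_15 (d n k : ℕ) (hd : 1 ≤ d) (hn : 2 ≤ n) (hk1 : 1 ≤ k) (hkn : k ≤ n)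
    (a : Fin n → Fin d → ℤ)
    (aR : Fin n → Fin d → ℝ) (haR : ∀ μ i, aR μ i = (a μ i : ℝ))
    (hdim : Module.finrank ℝ (Submodule.span ℝ (Set.range aR)) = n - 1)
    (hindep : ∀ μ₀ : Fin n,
      LinearIndependent ℝ (fun ν : {ν : Fin n // ν ≠ μ₀} => aR ν.1))
    (ℓ : Fin n → ℤ) (hℓpos : ∀ μ, 0 < ℓ μ)
    (ℓs : Fin n → ℤ) (hℓs : ∀ μ : Fin n, ℓs μ = if (μ : ℕ) < k then ℓ μ else -ℓ μ)
    (hlat : ∀ l : Fin n → ℤ, (∑ μ, l μ • a μ) = 0 ↔ ∃ z : ℤ, l = z • ℓs)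
    (aC : Fin n → Fin d → ℂ) (haC : ∀ μ i, aC μ i = (a μ i : ℂ))
    (E E' : (Fin d → ℂ) → Set (Fin n → ℂ))
    (hE : ∀ (γ : Fin d → ℂ) (v : Fin n → ℂ), v ∈ E γ ↔
      (∑ μ, v μ • aC μ) = γ ∧
        ∃ i : Fin n, (i : ℕ) < k ∧ ∃ b : ℕ, (b : ℤ) < ℓ i ∧ v i = (b : ℂ))
    (hE' : ∀ (γ : Fin d → ℂ) (v : Fin n → ℂ), v ∈ E' γ ↔
      v ∈ E γ ∧ ∀ i : Fin n, (i : ℕ) < k → ∀ m : ℤ, m < 0 → v i ≠ (m : ℂ))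
    (β : Fin d → ℂ) (hβ : β ∈ Submodule.span ℂ (Set.range aC))
    (hnr : ∀ i j : Fin n, (i : ℕ) < k → k ≤ (j : ℕ) → ∀ c : Fin n → ℤ,
      β + ∑ μ, (c μ : ℂ) • aC μ ∉
        Submodule.span ℂ (aC '' {μ : Fin n | μ ≠ i ∧ μ ≠ j}))
    (v : Fin n → ℂ) (hv : v ∈ E' β) (w : Fin n → ℤ) (z : ℤ)
    (hz : ∀ i : Fin n, (i : ℕ) < k → ∀ m : ℤ, v i = (m : ℂ) → 0 ≤ m + w i + z * ℓ i) :
    (∏ i ∈ Finset.univ.filter (fun i : Fin n => (i : ℕ) < k),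
        Mzero (v i) (w i + z * ℓ i)) *
      (∏ j ∈ Finset.univ.filter (fun j : Fin n => ¬ (j : ℕ) < k),
        Mzero (v j) (w j - z * ℓ j)) ≠ 0 :=
  stmt_15_general d n k ℓ aC E E' hE hE' β hnr v hv w z hz
end

section
/- Suppose β is nonresonant, let u ∈ ℤA (viewed in ℂ^d), and set γ = β + u. Then for every v ∈ E'_β there exists a unique v' ∈ E'_γ such that v' − v ∈ ℤ^n; moreover {i ∈ {1,…,k} : v_i is a nonnegative integer} = {i ∈ {1,…,k} : v'_i is a nonnegative integer}. (Proposition 8.1.) -/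
/-!
Since the integer relations among the `a μ` are `ℤ ℓs`, the integral translates of `v` solving
`∑ w μ • a μ = γ` are the vectors `v + cu + z ℓs`, `z ∈ ℤ`. Along this line the coordinates
`i < k` at which `v` is integral (a nonempty set `S`, because `v ∈ E_β`) move by `z ℓ i` with
`ℓ i > 0`, while the other coordinates never become integral. Membership in `E'_γ` thus asks that
all `v i + cu i + z ℓ i`, `i ∈ S`, be nonnegative and one of them be below `ℓ i`, which determines
`z`. The natural coordinates among the first `k` are the same for `v` and `v'`, since neither
vector has a negative integer there.
-/

open Finset

lemma neg_ediv_le_iff_nonneg_add_mul {m L z : ℤ} (hL : 0 < L) : -(m / L) ≤ z ↔ 0 ≤ m + z * L := by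
  rw [neg_le, Int.le_ediv_iff_mul_le hL]
  constructor <;> intro h <;> linarith

lemma le_neg_ediv_iff_add_mul_lt {m L z : ℤ} (hL : 0 < L) : z ≤ -(m / L) ↔ m + z * L < L := by
  rw [le_neg, ← Int.lt_add_one_iff, Int.ediv_lt_iff_lt_mul hL]
  constructor <;> intro h <;> linarith

/-- The shift is `max_{i ∈ S} ⌈-m i / L i⌉ = max_{i ∈ S} -(m i / L i)`. -/
theorem existsUnique_nonneg_add_mul_and_lt {ι : Type*} (S : Finset ι) (hS : S.Nonempty)
    (m L : ι → ℤ) (hL : ∀ i ∈ S, 0 < L i) :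
    ∃! z : ℤ, (∀ i ∈ S, 0 ≤ m i + z * L i) ∧ ∃ i ∈ S, m i + z * L i < L i := by
  set f : ι → ℤ := fun i => -(m i / L i)
  refine ⟨S.sup' hS f, ⟨fun i hi => ?_, ?_⟩, ?_⟩
  · exact (neg_ediv_le_iff_nonneg_add_mul (hL i hi)).1 (le_sup' f hi)
  · obtain ⟨i, hi, hfi⟩ := exists_mem_eq_sup' hS f
    exact ⟨i, hi, (le_neg_ediv_iff_add_mul_lt (hL i hi)).1 hfi.le⟩
  · rintro z ⟨hnonneg, i, hi, hlt⟩
    refine le_antisymm ((le_neg_ediv_iff_add_mul_lt (hL i hi)).2 hlt |>.trans (le_sup' f hi)) ?_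
    exact sup'_le hS f fun j hj => (neg_ediv_le_iff_nonneg_add_mul (hL j hj)).2 (hnonneg j hj)

section IntegerRelations

variable {ι κ R : Type*} [Fintype ι] [Ring R]

lemma sum_intCast_smul_intCast (a : ι → κ → ℤ) (c : ι → ℤ) :
    ∑ μ, (c μ : R) • (fun x => (a μ x : R)) = fun x => ((∑ μ, c μ • a μ) x : R) := by
  funext x
  simp [Finset.sum_apply]

lemma sum_intCast_smul_intCast_eq_zero_iff [CharZero R] (a : ι → κ → ℤ) (c : ι → ℤ) :
    ∑ μ, (c μ : R) • (fun x => (a μ x : R)) = 0 ↔ ∑ μ, c μ • a μ = 0 := by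
  rw [sum_intCast_smul_intCast, funext_iff, funext_iff]
  simp only [Pi.zero_apply, Int.cast_eq_zero]

lemma sum_add_intCast_smul_eq_iff [CharZero R] (a : ι → κ → ℤ) {ℓs : ι → ℤ}
    (hlat : ∀ l : ι → ℤ, ∑ μ, l μ • a μ = 0 ↔ ∃ z : ℤ, l = z • ℓs)
    {v : ι → R} {β : κ → R} (hv : ∑ μ, v μ • (fun x => (a μ x : R)) = β) (c cu : ι → ℤ) :
    ∑ μ, (v μ + c μ) • (fun x => (a μ x : R)) = β + ∑ μ, (cu μ : R) • (fun x => (a μ x : R)) ↔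
      ∃ z : ℤ, c = cu + z • ℓs := by
  have hsplit : ∑ μ, (v μ + c μ) • (fun x => (a μ x : R))
      = β + ∑ μ, (cu μ : R) • (fun x => (a μ x : R))
        + ∑ μ, ((c - cu) μ : R) • (fun x => (a μ x : R)) := by
    simp only [add_smul, sum_add_distrib, hv, Pi.sub_apply, Int.cast_sub, sub_smul, sum_sub_distrib]
    abel
  rw [hsplit, add_eq_left, sum_intCast_smul_intCast_eq_zero_iff, hlat]
  simp only [sub_eq_iff_eq_add']

end IntegerRelations

section Coordinates

variable {R : Type*} [Ring R]

lemma exists_natCast_eq_iff_exists_intCast_eq {x : R} (hx : ∀ t : ℤ, t < 0 → x ≠ t) :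
    (∃ b : ℕ, x = b) ↔ ∃ t : ℤ, x = t := by
  refine ⟨fun ⟨b, hb⟩ => ⟨b, by simp [hb]⟩, fun ⟨t, ht⟩ => ⟨t.toNat, ?_⟩⟩
  have h0 : 0 ≤ t := not_lt.1 fun hneg => hx t hneg ht
  rw [ht, ← Int.toNat_of_nonneg h0, Int.cast_natCast, Int.toNat_natCast]

lemma exists_intCast_eq_iff_of_sub_eq {x y : R} {m : ℤ} (h : y - x = m) :
    (∃ t : ℤ, x = t) ↔ ∃ t : ℤ, y = t := by
  rw [sub_eq_iff_eq_add] at h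
  refine ⟨fun ⟨t, ht⟩ => ⟨m + t, by rw [h, ht, Int.cast_add]⟩, fun ⟨t, ht⟩ => ⟨t - m, ?_⟩⟩
  rw [Int.cast_sub, ← ht, h, add_sub_cancel_left]

lemma exists_natCast_eq_iff_of_sub_eq {x y : R} {m : ℤ} (hx : ∀ t : ℤ, t < 0 → x ≠ t)
    (hy : ∀ t : ℤ, t < 0 → y ≠ t) (h : y - x = m) : (∃ b : ℕ, x = b) ↔ ∃ b : ℕ, y = b := by
  rw [exists_natCast_eq_iff_exists_intCast_eq hx, exists_natCast_eq_iff_exists_intCast_eq hy,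
    exists_intCast_eq_iff_of_sub_eq h]

variable [CharZero R]

lemma intCast_ne_of_neg_iff (t : ℤ) : (∀ s : ℤ, s < 0 → (t : R) ≠ s) ↔ 0 ≤ t := by
  simp only [ne_eq, Int.cast_inj]
  exact ⟨fun h => not_lt.1 fun ht => h t ht rfl, fun h s hs hts => by omega⟩

lemma exists_natCast_lt_eq_intCast_iff (t L : ℤ) :
    (∃ b : ℕ, (b : ℤ) < L ∧ (t : R) = b) ↔ 0 ≤ t ∧ t < L := by
  simp only [← Int.cast_natCast (R := R), Int.cast_inj]
  exact ⟨fun ⟨b, hb, hbt⟩ => ⟨hbt ▸ Int.natCast_nonneg b, hbt ▸ hb⟩,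
    fun ⟨h0, hL⟩ => ⟨t.toNat, by omega, by omega⟩⟩

/-- With `p i ↔ i < k` (zero-based) and `L = ℓ`, `E'_γ` consists of the admissible solutions of
`∑ w μ • a μ = γ`. -/
def IsAdmissible {ι : Type*} (p : ι → Prop) (L : ι → ℤ) (w : ι → R) : Prop :=
  (∃ i, p i ∧ ∃ b : ℕ, (b : ℤ) < L i ∧ w i = b) ∧ ∀ i, p i → ∀ t : ℤ, t < 0 → w i ≠ t

/-- An integral translate of `v` can be integral only at the coordinates where `v` is. -/
lemma isAdmissible_add_intCast_iff {ι : Type*} (p : ι → Prop) (v : ι → R) (S : Finset ι)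
    (hS : ∀ i, i ∈ S ↔ p i ∧ ∃ t : ℤ, v i = t) {m : ι → ℤ} (hm : ∀ i ∈ S, v i = m i)
    (L c : ι → ℤ) :
    IsAdmissible p L (fun i => v i + c i) ↔
      (∀ i ∈ S, 0 ≤ m i + c i) ∧ ∃ i ∈ S, m i + c i < L i := by
  simp only [IsAdmissible]
  have hinS : ∀ i ∈ S, v i + c i = ((m i + c i : ℤ) : R) := fun i hi => by
    rw [Int.cast_add, hm i hi]
  have hnotS : ∀ i, p i → i ∉ S → ∀ t : ℤ, v i + c i ≠ t := fun i hp hi t h =>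
    hi ((hS i).2 ⟨hp, t - c i, by rw [Int.cast_sub, ← h, add_sub_cancel_right]⟩)
  constructor
  · rintro ⟨⟨i, hp, b, hb, hvb⟩, hneg⟩
    have hi : i ∈ S := by
      by_contra hi
      exact hnotS i hp hi b (by rw [hvb, Int.cast_natCast])
    refine ⟨fun j hj => ?_, i, hi, ?_⟩
    · exact (intCast_ne_of_neg_iff (R := R) _).1 (hinS j hj ▸ hneg j ((hS j).1 hj).1)
    · exact ((exists_natCast_lt_eq_intCast_iff (R := R) _ _).1 ⟨b, hb, hinS i hi ▸ hvb⟩).2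
  · rintro ⟨hnonneg, i, hi, hlt⟩
    refine ⟨⟨i, ((hS i).1 hi).1, ?_⟩, fun j hp => ?_⟩
    · rw [hinS i hi]
      exact (exists_natCast_lt_eq_intCast_iff _ _).2 ⟨hnonneg i hi, hlt⟩
    · by_cases hj : j ∈ S
      · rw [hinS j hj]
        exact (intCast_ne_of_neg_iff _).2 (hnonneg j hj)
      · exact fun t _ => hnotS j hp hj t

theorem existsUnique_isAdmissible_add_intCast {ι : Type*} [Fintype ι] (p : ι → Prop)
    {v : ι → R} (hv : ∃ i, p i ∧ ∃ t : ℤ, v i = t) {L : ι → ℤ} (hL : ∀ i, p i → 0 < L i)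
    (cu : ι → ℤ) {ℓs : ι → ℤ} (hℓs : ∀ i, p i → ℓs i = L i) :
    ∃! z : ℤ, IsAdmissible p L (fun i => v i + ((cu + z • ℓs) i : ℤ)) := by
  classical
  set S := univ.filter fun i => p i ∧ ∃ t : ℤ, v i = t
  have hS : ∀ i, i ∈ S ↔ p i ∧ ∃ t : ℤ, v i = t := by simp [S]
  choose! m hm using fun i (hi : i ∈ S) => ((hS i).1 hi).2
  have hshift : ∀ z : ℤ, ∀ i ∈ S, m i + (cu + z • ℓs) i = (m + cu) i + z * L i :=
    fun z i hi => by simp [hℓs i ((hS i).1 hi).1, add_assoc]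
  obtain ⟨i₀, hi₀, hvi₀⟩ := hv
  simp only [isAdmissible_add_intCast_iff p v S hS hm]
  refine (existsUnique_congr fun z => ?_).2 <| existsUnique_nonneg_add_mul_and_lt S
    ⟨i₀, (hS i₀).2 ⟨hi₀, hvi₀⟩⟩ (m + cu) L fun i hi => hL i ((hS i).1 hi).1
  exact and_congr (forall₂_congr fun i hi => by rw [hshift z i hi])
    (exists_congr fun i => and_congr_right fun hi => by rw [hshift z i hi])

end Coordinates

theorem stmt_16_general (d n k : ℕ)
    (a : Fin n → Fin d → ℤ)
    (ℓ : Fin n → ℤ) (hℓpos : ∀ μ, 0 < ℓ μ)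
    (ℓs : Fin n → ℤ) (hℓs : ∀ μ : Fin n, ℓs μ = if (μ : ℕ) < k then ℓ μ else -ℓ μ)
    (hlat : ∀ l : Fin n → ℤ, (∑ μ, l μ • a μ) = 0 ↔ ∃ z : ℤ, l = z • ℓs)
    (aC : Fin n → Fin d → ℂ) (haC : ∀ μ i, aC μ i = (a μ i : ℂ))
    (E E' : (Fin d → ℂ) → Set (Fin n → ℂ))
    (hE : ∀ (γ : Fin d → ℂ) (v : Fin n → ℂ), v ∈ E γ ↔
      (∑ μ, v μ • aC μ) = γ ∧
        ∃ i : Fin n, (i : ℕ) < k ∧ ∃ b : ℕ, (b : ℤ) < ℓ i ∧ v i = (b : ℂ))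
    (hE' : ∀ (γ : Fin d → ℂ) (v : Fin n → ℂ), v ∈ E' γ ↔
      v ∈ E γ ∧ ∀ i : Fin n, (i : ℕ) < k → ∀ m : ℤ, m < 0 → v i ≠ (m : ℂ))
    (β : Fin d → ℂ)
    (cu : Fin n → ℤ) (γ : Fin d → ℂ) (hγ : γ = β + ∑ μ, (cu μ : ℂ) • aC μ)
    (v : Fin n → ℂ) (hv : v ∈ E' β) :
    (∃! v' : Fin n → ℂ, v' ∈ E' γ ∧ ∀ μ : Fin n, ∃ m : ℤ, v' μ - v μ = (m : ℂ)) ∧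
    (∀ v' : Fin n → ℂ, v' ∈ E' γ → (∀ μ : Fin n, ∃ m : ℤ, v' μ - v μ = (m : ℂ)) →
      {i : Fin n | (i : ℕ) < k ∧ ∃ b : ℕ, v i = (b : ℂ)} =
        {i : Fin n | (i : ℕ) < k ∧ ∃ b : ℕ, v' i = (b : ℂ)}) := by
  obtain rfl : aC = fun μ x => (a μ x : ℂ) := funext fun μ => funext (haC μ)
  beta_reduce at hE hγ
  have hmem : ∀ γ w, w ∈ E' γ ↔ ∑ μ, w μ • (fun x => (a μ x : ℂ)) = γ ∧
      IsAdmissible (fun i : Fin n => (i : ℕ) < k) ℓ w := fun γ w => by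
    rw [hE', hE, and_assoc]; rfl
  obtain ⟨hsum, hvadm⟩ := (hmem β v).1 hv
  have htranslate : ∀ c : Fin n → ℤ, (fun μ => v μ + c μ) ∈ E' γ ↔ ∃ z : ℤ, c = cu + z • ℓs ∧
      IsAdmissible (fun i : Fin n => (i : ℕ) < k) ℓ (fun μ => v μ + ((cu + z • ℓs) μ : ℤ)) := by
    intro c
    rw [hmem, hγ, sum_add_intCast_smul_eq_iff a hlat hsum]
    exact ⟨fun ⟨⟨z, hz⟩, h⟩ => ⟨z, hz, hz ▸ h⟩, fun ⟨z, hz, h⟩ => ⟨⟨z, hz⟩, hz ▸ h⟩⟩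
  obtain ⟨i₀, hi₀, b₀, -, hvi₀⟩ := hvadm.1
  obtain ⟨z, hz, hz_unique⟩ := existsUnique_isAdmissible_add_intCast (v := v) (ℓs := ℓs)
    (fun i : Fin n => (i : ℕ) < k) ⟨i₀, hi₀, b₀, by rw [hvi₀, Int.cast_natCast]⟩
    (fun i _ => hℓpos i) cu (fun i hi => by rw [hℓs i, if_pos hi])
  refine ⟨⟨fun μ => v μ + ((cu + z • ℓs) μ : ℤ), ⟨(htranslate _).2 ⟨z, rfl, hz⟩,
    fun μ => ⟨_, add_sub_cancel_left _ _⟩⟩, ?_⟩, fun w hw hwv => ?_⟩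
  · rintro w ⟨hw, hwv⟩
    choose c hc using hwv
    obtain rfl : w = fun μ => v μ + c μ := funext fun μ => by rw [← hc, add_sub_cancel]
    obtain ⟨z', rfl, hz'⟩ := (htranslate c).1 hw
    rw [hz_unique z' hz']
  · ext i
    exact and_congr_right fun hi => exists_natCast_eq_iff_of_sub_eq (hvadm.2 i hi)
      (((hmem γ w).1 hw).2.2 i hi) (hwv i).choose_spec

/-- Proposition 8.1: for nonresonant β and γ = β + u with u ∈ ℤA, each v ∈ E'_β has a unique integral translate v' ∈ E'_γ, and M_v = M_{v'}. -/
theorem stmt_16 (d n k : ℕ) (hd : 1 ≤ d) (hn : 2 ≤ n) (hk1 : 1 ≤ k) (hkn : k ≤ n)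
    (a : Fin n → Fin d → ℤ)
    (aR : Fin n → Fin d → ℝ) (haR : ∀ μ i, aR μ i = (a μ i : ℝ))
    (hdim : Module.finrank ℝ (Submodule.span ℝ (Set.range aR)) = n - 1)
    (hindep : ∀ μ₀ : Fin n,
      LinearIndependent ℝ (fun ν : {ν : Fin n // ν ≠ μ₀} => aR ν.1))
    (ℓ : Fin n → ℤ) (hℓpos : ∀ μ, 0 < ℓ μ)
    (ℓs : Fin n → ℤ) (hℓs : ∀ μ : Fin n, ℓs μ = if (μ : ℕ) < k then ℓ μ else -ℓ μ)
    (hlat : ∀ l : Fin n → ℤ, (∑ μ, l μ • a μ) = 0 ↔ ∃ z : ℤ, l = z • ℓs)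
    (aC : Fin n → Fin d → ℂ) (haC : ∀ μ i, aC μ i = (a μ i : ℂ))
    (E E' : (Fin d → ℂ) → Set (Fin n → ℂ))
    (hE : ∀ (γ : Fin d → ℂ) (v : Fin n → ℂ), v ∈ E γ ↔
      (∑ μ, v μ • aC μ) = γ ∧
        ∃ i : Fin n, (i : ℕ) < k ∧ ∃ b : ℕ, (b : ℤ) < ℓ i ∧ v i = (b : ℂ))
    (hE' : ∀ (γ : Fin d → ℂ) (v : Fin n → ℂ), v ∈ E' γ ↔
      v ∈ E γ ∧ ∀ i : Fin n, (i : ℕ) < k → ∀ m : ℤ, m < 0 → v i ≠ (m : ℂ))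
    (β : Fin d → ℂ) (hβ : β ∈ Submodule.span ℂ (Set.range aC))
    (hnr : ∀ i j : Fin n, (i : ℕ) < k → k ≤ (j : ℕ) → ∀ c : Fin n → ℤ,
      β + ∑ μ, (c μ : ℂ) • aC μ ∉
        Submodule.span ℂ (aC '' {μ : Fin n | μ ≠ i ∧ μ ≠ j}))
    (cu : Fin n → ℤ) (γ : Fin d → ℂ) (hγ : γ = β + ∑ μ, (cu μ : ℂ) • aC μ)
    (v : Fin n → ℂ) (hv : v ∈ E' β) :
    (∃! v' : Fin n → ℂ, v' ∈ E' γ ∧ ∀ μ : Fin n, ∃ m : ℤ, v' μ - v μ = (m : ℂ)) ∧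
    (∀ v' : Fin n → ℂ, v' ∈ E' γ → (∀ μ : Fin n, ∃ m : ℤ, v' μ - v μ = (m : ℂ)) →
      {i : Fin n | (i : ℕ) < k ∧ ∃ b : ℕ, v i = (b : ℂ)} =
        {i : Fin n | (i : ℕ) < k ∧ ∃ b : ℕ, v' i = (b : ℂ)}) :=
  stmt_16_general d n k a ℓ hℓpos ℓs hℓs hlat aC haC E E' hE hE' β cu γ hγ v hv
end

section
/- Suppose β is nonresonant, let v ∈ E'_β, let γ ∈ V_ℂ, and let v' ∈ E'_γ be such that w := v' − v ∈ ℤ^n. Then for every integer z < 0 one has ∏_{i=1}^k M_{w_i + zℓ_i, 0}(v_i) · ∏_{j=k+1}^n M_{w_j − zℓ_j, 0}(v_j) = 0, and for every integer z ≥ 0 one has ∏_{i=1}^k M_{w_i + zℓ_i, 0}(v_i) · ∏_{j=k+1}^n M_{w_j − zℓ_j, 0}(v_j) = (∏_{μ=1}^n M_{w_μ, 0}(v_μ)) · ∏_{i=1}^k M_{zℓ_i, 0}(v'_i) · ∏_{j=k+1}^n M_{−zℓ_j, 0}(v'_j). (The coefficientwise form of Equation (8.5): Φ^∅_{v,β+u}(x)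 = (∏_{μ=1}^n M_{ℓ^{(u)}_μ,0}(v_μ)) · Φ^∅_{v',γ}(x) with ℓ^{(u)} = v' − v.) -/
open Finset

lemma Mzero_natCast (c : ℂ) (e : ℕ) : Mzero c e = (∏ t ∈ range e, (c + t + 1))⁻¹ := by
  simp [Mzero]

lemma Mzero_neg_natCast (c : ℂ) (e : ℕ) : Mzero c (-e) = ∏ t ∈ range e, (c - t) := by
  rcases e with _ | e
  · simp [Mzero]
  · rw [Mzero, if_neg (by omega), neg_neg, Int.toNat_natCast]

lemma Mzero_zero (c : ℂ) : Mzero c 0 = 1 := by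
  simp [Mzero]

lemma Mzero_eq_mul_add_one (c : ℂ) (u : ℤ) (h : u < 0 ∨ c + u + 1 ≠ 0) :
    Mzero c u = Mzero c (u + 1) * (c + u + 1) := by
  rcases le_or_gt 0 u with hu | hu
  · lift u to ℕ using hu
    have hne : c + u + 1 ≠ 0 := by simpa using h.resolve_left (by omega)
    rw [show (u : ℤ) + 1 = ((u + 1 : ℕ) : ℤ) by push_cast; ring, Mzero_natCast, Mzero_natCast,
      prod_range_succ, mul_inv, Int.cast_natCast, inv_mul_cancel_right₀ hne]
  · obtain ⟨n, rfl⟩ : ∃ n : ℕ, u = -((n + 1 : ℕ) : ℤ) := ⟨(-u - 1).toNat, by omega⟩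
    rw [show -((n + 1 : ℕ) : ℤ) + 1 = -(n : ℤ) by push_cast; ring, Mzero_neg_natCast,
      Mzero_neg_natCast, prod_range_succ]
    push_cast
    ring

lemma Mzero_natCast_eq_zero {m : ℕ} {e : ℤ} (h : e + m < 0) : Mzero m e = 0 := by
  obtain ⟨p, rfl⟩ : ∃ p : ℕ, e = -p := ⟨(-e).toNat, by omega⟩
  rw [Mzero_neg_natCast]
  exact prod_eq_zero (mem_range.2 (by omega)) (sub_self _)

lemma Mzero_add_of_nonneg (c : ℂ) (w : ℤ) {e : ℤ} (he : 0 ≤ e)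
    (h : ∀ m : ℤ, m < 0 → c + w ≠ m) : Mzero c (w + e) = Mzero c w * Mzero (c + w) e := by
  lift e to ℕ using he
  induction e with
  | zero => simp [Mzero_zero]
  | succ e ih =>
    have hne : c + w + e + 1 ≠ 0 := fun h0 ↦
      h (-(e + 1)) (by omega) (by push_cast; linear_combination h0)
    have step := Mzero_eq_mul_add_one c (w + e) (.inr (by push_cast; rwa [← add_assoc]))
    have step' := Mzero_eq_mul_add_one (c + w) e (.inr (by push_cast; exact hne))
    push_cast at ih step step' ⊢
    rw [← add_assoc]
    apply mul_right_cancel₀ hne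
    rw [mul_assoc, ← step', ← ih, step, add_assoc c]

lemma Mzero_sub_of_nonneg (c : ℂ) (w : ℤ) {e : ℤ} (he : 0 ≤ e)
    (h : ∀ m : ℕ, c + w ≠ m) : Mzero c (w - e) = Mzero c w * Mzero (c + w) (-e) := by
  lift e to ℕ using he
  induction e with
  | zero => simp [Mzero_zero]
  | succ e ih =>
    have hne : c + (w - e - 1 : ℤ) + 1 ≠ 0 := fun h0 ↦
      h e (by push_cast at h0; linear_combination h0)
    rw [show w - ((e + 1 : ℕ) : ℤ) = w - e - 1 by push_cast; ring,
      show -((e + 1 : ℕ) : ℤ) = -e - 1 by push_cast; ring,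
      Mzero_eq_mul_add_one c _ (.inr hne), Mzero_eq_mul_add_one (c + w) _ (.inl (by omega)),
      sub_add_cancel, sub_add_cancel, ih]
    push_cast
    ring

lemma exists_natCast_of_intCast {R : Type*} [Ring R] {x : R} {p : ℤ} (hx : x = p)
    (h : ∀ m : ℤ, m < 0 → x ≠ m) : ∃ m : ℕ, x = m ∧ (m : ℤ) = p := by
  have hp : 0 ≤ p := not_lt.1 fun hneg ↦ h p hneg hx
  exact ⟨p.toNat, by rw [hx, ← Int.cast_natCast, Int.toNat_of_nonneg hp], Int.toNat_of_nonneg hp⟩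

lemma sum_smul_mem_span_of_eq_zero {ι K M : Type*} [Fintype ι] [Semiring K] [AddCommMonoid M]
    [Module K M] (x : ι → M) (f : ι → K) {i j : ι} (hi : f i = 0) (hj : f j = 0) :
    ∑ μ, f μ • x μ ∈ Submodule.span K (x '' {μ | μ ≠ i ∧ μ ≠ j}) := by
  refine Submodule.sum_mem _ fun μ _ ↦ ?_
  by_cases hμ : μ = i ∨ μ = j
  · rcases hμ with rfl | rfl <;> simp [hi, hj]
  · push Not at hμ
    exact Submodule.smul_mem _ _ (Submodule.subset_span ⟨μ, hμ, rfl⟩)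

/-- If `v_j` were an integer too, shifting `v` by integers to vanish at `i` and `j` would put a point
of `β + ℤx` into the span of the other `x_μ`. -/
lemma ne_intCast_of_nonresonant {ι K M : Type*} [Fintype ι] [DecidableEq ι] [CommRing K]
    [AddCommGroup M] [Module K M] (x : ι → M) (β : M) (v : ι → K) (hv : ∑ μ, v μ • x μ = β)
    {i j : ι} (hnr : ∀ c : ι → ℤ, β + ∑ μ, (c μ : K) • x μ ∉
      Submodule.span K (x '' {μ | μ ≠ i ∧ μ ≠ j}))
    {b : ℤ} (hvi : v i = b) (m : ℤ) : v j ≠ m := by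
  intro hvj
  let c : ι → ℤ := fun μ ↦ if μ = i then -b else if μ = j then -m else 0
  have hshift : β + ∑ μ, (c μ : K) • x μ = ∑ μ, (v μ + c μ) • x μ := by
    simp only [← hv, add_smul, sum_add_distrib]
  refine hnr c (hshift ▸ sum_smul_mem_span_of_eq_zero x _ ?_ ?_)
  · simp [c, hvi]
  · by_cases hji : j = i
    · subst hji; simp [c, hvi]
    · simp [c, hji, hvj]

theorem stmt_17_general (d n k : ℕ)
    (ℓ : Fin n → ℤ) (hℓpos : ∀ μ, 0 < ℓ μ)
    (aC : Fin n → Fin d → ℂ)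
    (E E' : (Fin d → ℂ) → Set (Fin n → ℂ))
    (hE : ∀ (γ : Fin d → ℂ) (v : Fin n → ℂ), v ∈ E γ ↔
      (∑ μ, v μ • aC μ) = γ ∧
        ∃ i : Fin n, (i : ℕ) < k ∧ ∃ b : ℕ, (b : ℤ) < ℓ i ∧ v i = (b : ℂ))
    (hE' : ∀ (γ : Fin d → ℂ) (v : Fin n → ℂ), v ∈ E' γ ↔
      v ∈ E γ ∧ ∀ i : Fin n, (i : ℕ) < k → ∀ m : ℤ, m < 0 → v i ≠ (m : ℂ))
    (β : Fin d → ℂ)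
    (hnr : ∀ i j : Fin n, (i : ℕ) < k → k ≤ (j : ℕ) → ∀ c : Fin n → ℤ,
      β + ∑ μ, (c μ : ℂ) • aC μ ∉
        Submodule.span ℂ (aC '' {μ : Fin n | μ ≠ i ∧ μ ≠ j}))
    (v : Fin n → ℂ) (hv : v ∈ E' β)
    (γ : Fin d → ℂ)
    (v' : Fin n → ℂ) (hv' : v' ∈ E' γ)
    (w : Fin n → ℤ) (hw : ∀ μ : Fin n, v' μ = v μ + (w μ : ℂ)) :
    (∀ z : ℤ, z < 0 →
      (∏ i ∈ Finset.univ.filter (fun i : Fin n => (i : ℕ) < k),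
          Mzero (v i) (w i + z * ℓ i)) *
        (∏ j ∈ Finset.univ.filter (fun j : Fin n => ¬ (j : ℕ) < k),
          Mzero (v j) (w j - z * ℓ j)) = 0) ∧
    (∀ z : ℤ, 0 ≤ z →
      (∏ i ∈ Finset.univ.filter (fun i : Fin n => (i : ℕ) < k),
          Mzero (v i) (w i + z * ℓ i)) *
        (∏ j ∈ Finset.univ.filter (fun j : Fin n => ¬ (j : ℕ) < k),
          Mzero (v j) (w j - z * ℓ j)) =
      (∏ μ : Fin n, Mzero (v μ) (w μ)) *
        ((∏ i ∈ Finset.univ.filter (fun i : Fin n => (i : ℕ) < k),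
            Mzero (v' i) (z * ℓ i)) *
          (∏ j ∈ Finset.univ.filter (fun j : Fin n => ¬ (j : ℕ) < k),
            Mzero (v' j) (-(z * ℓ j))))) := by
  obtain ⟨hvE, hv_nonneg⟩ := (hE' β v).1 hv
  obtain ⟨hv_sum, i₀, hi₀, b, -, hv_i₀⟩ := (hE β v).1 hvE
  obtain ⟨hv'E, hv'_nonneg⟩ := (hE' γ v').1 hv'
  obtain ⟨-, i₁, hi₁, b', hb', hv'_i₁⟩ := (hE γ v').1 hv'E
  refine ⟨fun z hz ↦ ?_, fun z hz ↦ ?_⟩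
  · have hv_i₁ : v i₁ = ((b' - w i₁ : ℤ) : ℂ) := by push_cast; linear_combination hv'_i₁ - hw i₁
    obtain ⟨m, hm, hmb'⟩ := exists_natCast_of_intCast hv_i₁ (hv_nonneg i₁ hi₁)
    refine mul_eq_zero_of_left (prod_eq_zero (mem_filter.2 ⟨mem_univ i₁, hi₁⟩) ?_) _
    rw [hm]
    exact Mzero_natCast_eq_zero (by nlinarith [hℓpos i₁])
  · have hz_ℓ (μ : Fin n) : 0 ≤ z * ℓ μ := mul_nonneg hz (hℓpos μ).le
    have h_lower (i) (hi : i ∈ univ.filter fun i : Fin n ↦ (i : ℕ) < k) :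
        Mzero (v i) (w i + z * ℓ i) = Mzero (v i) (w i) * Mzero (v' i) (z * ℓ i) := by
      rw [hw, Mzero_add_of_nonneg _ _ (hz_ℓ i) (hw i ▸ hv'_nonneg i (mem_filter.1 hi).2)]
    have h_upper (j) (hj : j ∈ univ.filter fun j : Fin n ↦ ¬ (j : ℕ) < k) :
        Mzero (v j) (w j - z * ℓ j) = Mzero (v j) (w j) * Mzero (v' j) (-(z * ℓ j)) := by
      refine hw j ▸ Mzero_sub_of_nonneg _ _ (hz_ℓ j) fun m h ↦ ?_
      refine ne_intCast_of_nonresonant aC β v hv_sum (hnr i₀ j hi₀ (not_lt.1 (mem_filter.1 hj).2))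
        hv_i₀ (m - w j) ?_
      push_cast; linear_combination h
    rw [prod_congr rfl h_lower, prod_congr rfl h_upper, prod_mul_distrib, prod_mul_distrib,
      ← prod_filter_mul_prod_filter_not univ (fun μ : Fin n ↦ (μ : ℕ) < k)]
    ring

/-- Coefficientwise form of Equation (8.5): with w = v' − v ∈ ℤ^n, the coefficients of
Φ^∅_{v,β+u} vanish for z < 0 and for z ≥ 0 equal ∏_μ M_{w_μ,0}(v_μ) times the
corresponding coefficients of Φ^∅_{v',γ}. -/
theorem stmt_17 (d n k : ℕ) (hd : 1 ≤ d) (hn : 2 ≤ n) (hk1 : 1 ≤ k) (hkn : k ≤ n)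
    (a : Fin n → Fin d → ℤ)
    (aR : Fin n → Fin d → ℝ) (haR : ∀ μ i, aR μ i = (a μ i : ℝ))
    (hdim : Module.finrank ℝ (Submodule.span ℝ (Set.range aR)) = n - 1)
    (hindep : ∀ μ₀ : Fin n,
      LinearIndependent ℝ (fun ν : {ν : Fin n // ν ≠ μ₀} => aR ν.1))
    (ℓ : Fin n → ℤ) (hℓpos : ∀ μ, 0 < ℓ μ)
    (ℓs : Fin n → ℤ) (hℓs : ∀ μ : Fin n, ℓs μ = if (μ : ℕ) < k then ℓ μ else -ℓ μ)
    (hlat : ∀ l : Fin n → ℤ, (∑ μ, l μ • a μ) = 0 ↔ ∃ z : ℤ, l = z • ℓs)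
    (aC : Fin n → Fin d → ℂ) (haC : ∀ μ i, aC μ i = (a μ i : ℂ))
    (E E' : (Fin d → ℂ) → Set (Fin n → ℂ))
    (hE : ∀ (γ : Fin d → ℂ) (v : Fin n → ℂ), v ∈ E γ ↔
      (∑ μ, v μ • aC μ) = γ ∧
        ∃ i : Fin n, (i : ℕ) < k ∧ ∃ b : ℕ, (b : ℤ) < ℓ i ∧ v i = (b : ℂ))
    (hE' : ∀ (γ : Fin d → ℂ) (v : Fin n → ℂ), v ∈ E' γ ↔
      v ∈ E γ ∧ ∀ i : Fin n, (i : ℕ) < k → ∀ m : ℤ, m < 0 → v i ≠ (m : ℂ))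
    (β : Fin d → ℂ) (hβ : β ∈ Submodule.span ℂ (Set.range aC))
    (hnr : ∀ i j : Fin n, (i : ℕ) < k → k ≤ (j : ℕ) → ∀ c : Fin n → ℤ,
      β + ∑ μ, (c μ : ℂ) • aC μ ∉
        Submodule.span ℂ (aC '' {μ : Fin n | μ ≠ i ∧ μ ≠ j}))
    (v : Fin n → ℂ) (hv : v ∈ E' β)
    (γ : Fin d → ℂ) (hγ : γ ∈ Submodule.span ℂ (Set.range aC))
    (v' : Fin n → ℂ) (hv' : v' ∈ E' γ)
    (w : Fin n → ℤ) (hw : ∀ μ : Fin n, v' μ = v μ + (w μ : ℂ)) :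
    (∀ z : ℤ, z < 0 →
      (∏ i ∈ Finset.univ.filter (fun i : Fin n => (i : ℕ) < k),
          Mzero (v i) (w i + z * ℓ i)) *
        (∏ j ∈ Finset.univ.filter (fun j : Fin n => ¬ (j : ℕ) < k),
          Mzero (v j) (w j - z * ℓ j)) = 0) ∧
    (∀ z : ℤ, 0 ≤ z →
      (∏ i ∈ Finset.univ.filter (fun i : Fin n => (i : ℕ) < k),
          Mzero (v i) (w i + z * ℓ i)) *
        (∏ j ∈ Finset.univ.filter (fun j : Fin n => ¬ (j : ℕ) < k),
          Mzero (v j) (w j - z * ℓ j)) =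
      (∏ μ : Fin n, Mzero (v μ) (w μ)) *
        ((∏ i ∈ Finset.univ.filter (fun i : Fin n => (i : ℕ) < k),
            Mzero (v' i) (z * ℓ i)) *
          (∏ j ∈ Finset.univ.filter (fun j : Fin n => ¬ (j : ℕ) < k),
            Mzero (v' j) (-(z * ℓ j))))) :=
  stmt_17_general d n k ℓ hℓpos aC E E' hE hE' β hnr v hv γ v' hv' w hw
end
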